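/- arXiv:2205.14537 — 9 statements merged into one kernel-verified Lean document; each statement's English description precedes it below -/
import Mathlib

section
/- For every real z ≥ 0, the first Riesz-mean of the Laplacian eigenvalues on the 2-sphere satisfies (1/2)·z² ≤ R₁(z) ≤ (1/2)·(z + 1/2)². Moreover, equality holds in the lower bound if and only if z = l(l+1) for some natural number l, and equality holds in the upper bound if and only if z = (l+1)² − 1/2 for some natural number l. -/
/-- First Riesz-mean of the Laplacian eigenvalues on the 2-sphere `S²`:
the eigenvalues are `l(l+1)` with multiplicity `2l+1`. -/
noncomputable def R1S2 (z : ℝ) : ℝ :=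
  ∑' l : ℕ, (2 * (l : ℝ) + 1) * max (z - (l : ℝ) * ((l : ℝ) + 1)) 0

lemma sum_formula (m : ℕ) (z : ℝ) :
    ∑ l ∈ Finset.range (m + 1), (2 * (l : ℝ) + 1) * (z - (l : ℝ) * ((l : ℝ) + 1))
      = ((m : ℝ) + 1) ^ 2 * z - (m : ℝ) * ((m : ℝ) + 1) ^ 2 * ((m : ℝ) + 2) / 2 := by
  induction m with
  | zero => simp
  | succ k ih =>
    rw [Finset.sum_range_succ, ih]
    push_cast
    ring

lemma R1_eq (m : ℕ) (z : ℝ) (h1 : (m : ℝ) * ((m : ℝ) + 1) ≤ z)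
    (h2 : z < ((m : ℝ) + 1) * ((m : ℝ) + 2)) :
    R1S2 z = ((m : ℝ) + 1) ^ 2 * z - (m : ℝ) * ((m : ℝ) + 1) ^ 2 * ((m : ℝ) + 2) / 2 := by
  rw [R1S2, tsum_eq_sum (s := Finset.range (m + 1)) ?_]
  · rw [← sum_formula m z]
    apply Finset.sum_congr rfl
    intro l hl
    have hl' : (l : ℝ) ≤ m := by
      exact_mod_cast Nat.lt_succ_iff.mp (Finset.mem_range.mp hl)
    have hl0 : (0 : ℝ) ≤ l := Nat.cast_nonneg l
    have : (l : ℝ) * ((l : ℝ) + 1) ≤ z := by nlinarith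
    rw [max_eq_left (by linarith)]
  · intro l hl
    have hl' : (m : ℝ) + 1 ≤ l := by
      exact_mod_cast Nat.succ_le_of_lt (Nat.lt_of_not_le (by
        simpa [Finset.mem_range, Nat.lt_succ_iff] using hl))
    have hm0 : (0 : ℝ) ≤ m := Nat.cast_nonneg m
    have : z < (l : ℝ) * ((l : ℝ) + 1) := by nlinarith
    rw [max_eq_right (by linarith), mul_zero]

lemma exists_m (z : ℝ) (hz : 0 ≤ z) :
    ∃ m : ℕ, (m : ℝ) * ((m : ℝ) + 1) ≤ z ∧ z < ((m : ℝ) + 1) * ((m : ℝ) + 2) := by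
  set s := Real.sqrt (4 * z + 1) with hs
  have hs0 : 0 ≤ s := Real.sqrt_nonneg _
  have hs2 : s ^ 2 = 4 * z + 1 := Real.sq_sqrt (by linarith)
  have hs1 : 1 ≤ s := by nlinarith
  refine ⟨⌊(s - 1) / 2⌋₊, ?_, ?_⟩
  · have h := Nat.floor_le (show (0 : ℝ) ≤ (s - 1) / 2 by linarith)
    set m := (⌊(s - 1) / 2⌋₊ : ℝ)
    have hm0 : 0 ≤ m := Nat.cast_nonneg _
    nlinarith
  · have h := Nat.lt_floor_add_one ((s - 1) / 2)
    set m := (⌊(s - 1) / 2⌋₊ : ℝ)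
    have hm0 : 0 ≤ m := Nat.cast_nonneg _
    nlinarith

theorem riesz_mean_S2_bounds :
    (∀ z : ℝ, 0 ≤ z →
      (1 / 2) * z ^ 2 ≤ R1S2 z ∧ R1S2 z ≤ (1 / 2) * (z + 1 / 2) ^ 2) ∧
    (∀ z : ℝ, 0 ≤ z →
      ((1 / 2) * z ^ 2 = R1S2 z ↔ ∃ l : ℕ, z = (l : ℝ) * ((l : ℝ) + 1))) ∧
    (∀ z : ℝ, 0 ≤ z →
      (R1S2 z = (1 / 2) * (z + 1 / 2) ^ 2 ↔ ∃ l : ℕ, z = ((l : ℝ) + 1) ^ 2 - 1 / 2)) := by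
  refine ⟨?_, ?_, ?_⟩
  · intro z hz
    obtain ⟨m, h1, h2⟩ := exists_m z hz
    rw [R1_eq m z h1 h2]
    constructor
    · nlinarith [mul_nonneg (sub_nonneg.2 h1) (le_of_lt (sub_pos.2 h2))]
    · nlinarith [sq_nonneg (z - ((m : ℝ) + 1) ^ 2 + 1 / 2)]
  · intro z hz
    constructor
    · intro heq
      obtain ⟨m, h1, h2⟩ := exists_m z hz
      rw [R1_eq m z h1 h2] at heq
      have key : (z - (m : ℝ) * ((m : ℝ) + 1)) * (((m : ℝ) + 1) * ((m : ℝ) + 2) - z) = 0 := by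
        linear_combination (-2 : ℝ) * heq
      rcases mul_eq_zero.mp key with h | h
      · exact ⟨m, by linarith⟩
      · linarith
    · rintro ⟨l, rfl⟩
      have hl0 : (0 : ℝ) ≤ l := Nat.cast_nonneg l
      rw [R1_eq l _ le_rfl (by nlinarith)]
      ring
  · intro z hz
    constructor
    · intro heq
      obtain ⟨m, h1, h2⟩ := exists_m z hz
      rw [R1_eq m z h1 h2] at heq
      have key : (z - (((m : ℝ) + 1) ^ 2 - 1 / 2)) ^ 2 = 0 := by
        linear_combination (-2 : ℝ) * heq
      have key' : z - (((m : ℝ) + 1) ^ 2 - 1 / 2) = 0 := by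
        exact pow_eq_zero_iff (two_ne_zero) |>.mp key
      exact ⟨m, by linarith⟩
    · rintro ⟨l, rfl⟩
      have hl0 : (0 : ℝ) ≤ l := Nat.cast_nonneg l
      rw [R1_eq l _ (by nlinarith) (by nlinarith)]
      ring
end

section
/- For every real z ≥ 0, with w = (−1 + √(1+4z))/2 the unique nonnegative solution of w(w+1) = z, the first Riesz-mean of the Laplacian eigenvalues on the 2-sphere satisfies (1/2)·z² + 2·(1/4 − ψ(w)²)·(z − √z/2) ≤ R₁(z) ≤ (1/2)·z² + 2·(1/4 − ψ(w)²)·(z + √z/2 + 1/2). -/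
/-- The fluctuation function `ψ(η) = η − ⌊η⌋ − 1/2`. -/
noncomputable def psi (η : ℝ) : ℝ := η - (⌊η⌋ : ℝ) - 1 / 2

lemma riesz_sum_formula (n : ℕ) (z : ℝ) :
    ∑ l ∈ Finset.range (n + 1), (2 * (l : ℝ) + 1) * (z - (l : ℝ) * ((l : ℝ) + 1)) =
      ((n : ℝ) + 1) ^ 2 * z - (n : ℝ) * ((n : ℝ) + 1) ^ 2 * ((n : ℝ) + 2) / 2 := by
  induction n with
  | zero => simp
  | succ n ih =>
    rw [Finset.sum_range_succ, ih]
    push_cast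
    ring

theorem riesz_mean_S2_improved_bounds (z : ℝ) (hz : 0 ≤ z) :
    (1 / 2) * z ^ 2 +
        2 * (1 / 4 - psi ((-1 + Real.sqrt (1 + 4 * z)) / 2) ^ 2) * (z - Real.sqrt z / 2) ≤
      R1S2 z ∧
    R1S2 z ≤
      (1 / 2) * z ^ 2 +
        2 * (1 / 4 - psi ((-1 + Real.sqrt (1 + 4 * z)) / 2) ^ 2) *
          (z + Real.sqrt z / 2 + 1 / 2) := by
  set w := (-1 + Real.sqrt (1 + 4 * z)) / 2 with hwdef
  have hs : Real.sqrt (1 + 4 * z) ^ 2 = 1 + 4 * z := Real.sq_sqrt (by linarith)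
  have hs1 : 1 ≤ Real.sqrt (1 + 4 * z) := by
    nlinarith [Real.sqrt_nonneg (1 + 4 * z), hs]
  have hw0 : 0 ≤ w := by rw [hwdef]; linarith
  have hwz : w * (w + 1) = z := by rw [hwdef]; nlinarith [hs]
  set n := ⌊w⌋.toNat with hn
  have hfl : (⌊w⌋ : ℝ) = (n : ℝ) := by
    rw [hn]
    norm_cast
    exact (Int.toNat_of_nonneg (Int.floor_nonneg.mpr hw0)).symm
  have hN1 : (n : ℝ) ≤ w := by rw [← hfl]; exact Int.floor_le w
  have hN2 : w < (n : ℝ) + 1 := by rw [← hfl]; exact Int.lt_floor_add_one w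
  have hR : R1S2 z = ((n : ℝ) + 1) ^ 2 * z - (n : ℝ) * ((n : ℝ) + 1) ^ 2 * ((n : ℝ) + 2) / 2 := by
    rw [R1S2, tsum_eq_sum (s := Finset.range (n + 1)) ?_]
    · rw [← riesz_sum_formula n z]
      apply Finset.sum_congr rfl
      intro l hl
      have hl' : (l : ℝ) ≤ (n : ℝ) := by
        exact_mod_cast Nat.lt_succ_iff.mp (Finset.mem_range.mp hl)
      have : (l : ℝ) * ((l : ℝ) + 1) ≤ z := by nlinarith
      rw [max_eq_left (by linarith)]
    · intro l hl
      have hl' : (n : ℝ) + 1 ≤ (l : ℝ) := by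
        have := Finset.mem_range.not.mp hl
        push_neg at this
        exact_mod_cast this
      have : z ≤ (l : ℝ) * ((l : ℝ) + 1) := by nlinarith
      rw [max_eq_right (by linarith), mul_zero]
  have hpsi : psi w = w - (n : ℝ) - 1 / 2 := by rw [psi, hfl]
  set r := Real.sqrt z with hrdef
  have hr2 : r ^ 2 = z := Real.sq_sqrt hz
  have hrw : w ≤ r := by
    rw [hrdef, show w = Real.sqrt (w ^ 2) from (Real.sqrt_sq hw0).symm]
    exact Real.sqrt_le_sqrt (by nlinarith)
  have hrw2 : r ≤ w + 1 / 2 := by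
    rw [hrdef, show w + 1 / 2 = Real.sqrt ((w + 1 / 2) ^ 2) from
      (Real.sqrt_sq (by linarith)).symm]
    exact Real.sqrt_le_sqrt (by nlinarith)
  rw [hR, hpsi]
  clear_value w n r
  clear hwdef hn hrdef hs hs1
  have hzz : z = w * (w + 1) := hwz.symm
  subst hzz
  set N := (n : ℝ) with hNdef
  clear_value N
  have hA : 0 ≤ (w - N) * (N + 1 - w) :=
    mul_nonneg (by linarith) (by linarith)
  have hB : (0:ℝ) ≤ N + 1 - w := by linarith
  have hC : (0:ℝ) ≤ w - N := by linarith
  have P1 : 0 ≤ (w - N) * (N + 1 - w) * (r - w) := mul_nonneg hA (by linarith)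
  have P2 : 0 ≤ (w - N) * (N + 1 - w) * (N + 1 - w) * (1 - (w - N)) :=
    mul_nonneg (mul_nonneg hA hB) (by linarith)
  have P3 : 0 ≤ (w - N) * (N + 1 - w) * (N + 1 - w) * w :=
    mul_nonneg (mul_nonneg hA hB) hw0
  have Q : 0 ≤ (w - N) * (N + 1 - w) * (w - N) * (w + 1 / 2) :=
    mul_nonneg (mul_nonneg hA hC) (by linarith)
  have hsq : 0 ≤ ((w - N) * (N + 1 - w)) ^ 2 := sq_nonneg _
  constructor
  · have key : ((N + 1) ^ 2 * (w * (w + 1)) - N * (N + 1) ^ 2 * (N + 2) / 2) -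
        ((1 / 2) * (w * (w + 1)) ^ 2 +
          2 * (1 / 4 - (w - N - 1 / 2) ^ 2) * (w * (w + 1) - r / 2)) =
        (w - N) * (N + 1 - w) * (r - w) +
          (w - N) * (N + 1 - w) * (N + 1 - w) * (1 - (w - N)) +
          2 * ((w - N) * (N + 1 - w) * (N + 1 - w) * w) +
          ((w - N) * (N + 1 - w)) ^ 2 / 2 := by ring
    linarith [key]
  · have key : ((1 / 2) * (w * (w + 1)) ^ 2 +
          2 * (1 / 4 - (w - N - 1 / 2) ^ 2) * (w * (w + 1) + r / 2 + 1 / 2)) -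
        ((N + 1) ^ 2 * (w * (w + 1)) - N * (N + 1) ^ 2 * (N + 2) / 2) =
        (w - N) * (N + 1 - w) * (r - w) +
          2 * ((w - N) * (N + 1 - w) * (w - N) * (w + 1 / 2)) +
          ((w - N) * (N + 1 - w)) ^ 2 / 2 := by ring
    linarith [key]
end

section
/- For every real z ≥ 0, the counting function of the Dirichlet Laplacian eigenvalues on the hemisphere S²₊ satisfies N^D(z) ≤ z/2. -/
/-- Counting function of the Dirichlet Laplacian eigenvalues on the hemisphere `S²₊`:
the eigenvalues are `l(l+1)` with multiplicity `l`, for integers `l ≥ 1`. -/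
noncomputable def NDS2 (z : ℝ) : ℝ :=
  ∑' l : ℕ, if 1 ≤ l ∧ (l : ℝ) * ((l : ℝ) + 1) ≤ z then (l : ℝ) else 0

theorem polya_hemisphere_S2 (z : ℝ) (hz : 0 ≤ z) : NDS2 z ≤ z / 2 := by
  classical
  have gauss : ∀ n : ℕ, ∑ i ∈ Finset.range (n+1), (i:ℝ) = n*(n+1)/2 := by
    intro n
    induction n with
    | zero => simp
    | succ n ih => rw [Finset.sum_range_succ, ih]; push_cast; ring
  set L := Nat.floor (Real.sqrt z) with hL
  have hsupp : ∀ l ∉ Finset.range (L+1),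
      (if 1 ≤ l ∧ (l : ℝ) * ((l : ℝ) + 1) ≤ z then (l : ℝ) else 0) = 0 := by
    intro l hl
    rw [if_neg]
    rintro ⟨h1, h2⟩
    apply hl
    simp only [Finset.mem_range]
    have hls : (l:ℝ) ≤ Real.sqrt z := by
      rw [Real.le_sqrt l.cast_nonneg hz]
      nlinarith
    have := Nat.le_floor hls
    omega
  rw [NDS2, tsum_eq_sum hsupp, Finset.sum_ite, Finset.sum_const_zero, add_zero]
  set S := (Finset.range (L+1)).filter
      (fun l : ℕ => 1 ≤ l ∧ (l:ℝ)*((l:ℝ)+1) ≤ z) with hS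
  rcases S.eq_empty_or_nonempty with he | hne
  · rw [he]; simp; positivity
  · set M := S.max' hne with hM
    have hMS : M ∈ S := S.max'_mem hne
    have hMz : (M:ℝ) * ((M:ℝ)+1) ≤ z := (Finset.mem_filter.mp hMS).2.2
    have hsub : S ⊆ Finset.range (M+1) := by
      intro l hl
      simp only [Finset.mem_range]
      exact Nat.lt_succ_of_le (S.le_max' l hl)
    calc ∑ l ∈ S, (l:ℝ) ≤ ∑ l ∈ Finset.range (M+1), (l:ℝ) := by
          apply Finset.sum_le_sum_of_subset_of_nonneg hsub
          intro i _ _; positivity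
      _ = M*(M+1)/2 := gauss M
      _ ≤ z/2 := by linarith
end

section
/- For every real z ≥ 0, the first Riesz-mean of the Neumann Laplacian eigenvalues on the hemisphere S²₊ satisfies (1/4)·z² + (1/3)·z·√(z + 1/4) ≤ R₁^N(z) ≤ (1/4)·z² + (1/3)·z·√(z + 1/4) + z. Moreover, equality holds in the lower bound if and only if z = l(l+1) for some natural number l. -/
/-- First Riesz-mean of the Neumann Laplacian eigenvalues on the hemisphere `S²₊`:
the eigenvalues are `l(l+1)` with multiplicity `l+1`, for `l ∈ ℕ`. -/
noncomputable def R1NS2 (z : ℝ) : ℝ :=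
  ∑' l : ℕ, ((l : ℝ) + 1) * max (z - (l : ℝ) * ((l : ℝ) + 1)) 0

/-- Closed form of the partial Riesz mean. -/
noncomputable def Fcl (z : ℝ) (N : ℝ) : ℝ :=
  z * N * (N + 1) / 2 - N ^ 2 * (N + 1) ^ 2 / 4 + N * (N + 1) * (2 * N + 1) / 6

lemma closed_sum (z : ℝ) (n : ℕ) :
    ∑ l ∈ Finset.range n, ((l : ℝ) + 1) * (z - (l : ℝ) * ((l : ℝ) + 1)) = Fcl z n := by
  induction n with
  | zero => simp [Fcl]
  | succ k ih =>
    rw [Finset.sum_range_succ, ih]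
    unfold Fcl
    push_cast
    ring

lemma master (z : ℝ) (hz : 0 ≤ z) :
    ∃ n : ℕ, 1 ≤ n ∧ R1NS2 z = Fcl z n ∧
      (n : ℝ) ≤ Real.sqrt (z + 1 / 4) + 1 / 2 ∧
      Real.sqrt (z + 1 / 4) + 1 / 2 < n + 1 := by
  set t := Real.sqrt (z + 1 / 4) with ht
  have ht2 : t ^ 2 = z + 1 / 4 := Real.sq_sqrt (by linarith)
  have ht0 : 0 ≤ t := Real.sqrt_nonneg _
  have ht12 : 1 / 2 ≤ t := by nlinarith
  refine ⟨⌊t + 1 / 2⌋₊, ?_, ?_, ?_, ?_⟩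
  · exact Nat.le_floor (by linarith)
  · have hn1 : (⌊t + 1 / 2⌋₊ : ℝ) ≤ t + 1 / 2 := Nat.floor_le (by linarith)
    have hn2 : t + 1 / 2 < ⌊t + 1 / 2⌋₊ + 1 := Nat.lt_floor_add_one _
    rw [R1NS2]
    rw [tsum_eq_sum (s := Finset.range ⌊t + 1 / 2⌋₊) ?_]
    · rw [← closed_sum]
      apply Finset.sum_congr rfl
      intro l hl
      rw [Finset.mem_range] at hl
      have : (l : ℝ) + 1 ≤ ⌊t + 1 / 2⌋₊ := by exact_mod_cast hl
      have hle : (l : ℝ) * ((l : ℝ) + 1) ≤ z := by nlinarith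
      rw [max_eq_left (by linarith)]
    · intro l hl
      rw [Finset.mem_range, not_lt] at hl
      have : (⌊t + 1 / 2⌋₊ : ℝ) ≤ l := by exact_mod_cast hl
      have hge : z ≤ (l : ℝ) * ((l : ℝ) + 1) := by nlinarith
      rw [max_eq_right (by linarith), mul_zero]
  · exact Nat.floor_le (by linarith)
  · exact Nat.lt_floor_add_one _

lemma arith_ineqs (t N z : ℝ) (h1 : 1 ≤ N) (h2 : N ≤ t + 1 / 2)
    (h3 : t + 1 / 2 < N + 1) (ht2 : t ^ 2 = z + 1 / 4) :
    z ^ 2 / 4 + z * t / 3 ≤ Fcl z N ∧ Fcl z N ≤ z ^ 2 / 4 + z * t / 3 + z ∧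
      (z ^ 2 / 4 + z * t / 3 = Fcl z N ↔ t = N - 1 / 2) := by
  have hzeq : z = t ^ 2 - 1 / 4 := by linarith
  obtain ⟨u, hu⟩ : ∃ u, u = t - N + 1 / 2 := ⟨_, rfl⟩
  obtain ⟨m, hm⟩ : ∃ m, m = N - 1 := ⟨_, rfl⟩
  have hu0 : 0 ≤ u := by rw [hu]; linarith
  have hu1 : u < 1 := by rw [hu]; linarith
  have hm0 : 0 ≤ m := by rw [hm]; linarith
  have hG : Fcl z N - (z ^ 2 / 4 + z * t / 3) =
      u * ((1 - u ^ 2) * (5 / 6 + u / 4) + m * (2 - u - u ^ 2) + m ^ 2 * (1 - u)) := by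
    rw [hzeq, hu, hm]; unfold Fcl; ring
  have hP : 0 < (1 - u ^ 2) * (5 / 6 + u / 4) + m * (2 - u - u ^ 2) + m ^ 2 * (1 - u) := by
    nlinarith [mul_nonneg hm0 hm0, sq_nonneg u, mul_nonneg hu0 hu0, mul_nonneg hm0 hu0]
  have hE : (z ^ 2 / 4 + z * t / 3 + z) - Fcl z N =
      u / 6 + 3 * u ^ 2 / 4 + 5 * u ^ 3 / 6 + u ^ 4 / 4 +
        m * (1 + u ^ 2 + u ^ 3) + m ^ 2 * (1 - u + u ^ 2) := by
    rw [hzeq, hu, hm]; unfold Fcl; ring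
  refine ⟨?_, ?_, ?_, ?_⟩
  · nlinarith [mul_nonneg hu0 hP.le]
  · nlinarith [mul_nonneg hu0 (mul_nonneg hu0 hu0), sq_nonneg u,
      mul_nonneg hm0 (mul_nonneg hu0 (mul_nonneg hu0 hu0)),
      mul_nonneg hm0 (mul_nonneg hu0 hu0), mul_nonneg hm0 hm0,
      mul_nonneg (mul_nonneg hm0 hm0) hu0,
      mul_nonneg (mul_nonneg hm0 hm0) (mul_nonneg hu0 hu0),
      sq_nonneg (m - u * m)]
  · intro heq
    have h0 : u * ((1 - u ^ 2) * (5 / 6 + u / 4) + m * (2 - u - u ^ 2) + m ^ 2 * (1 - u)) = 0 := by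
      rw [← hG]; linarith
    rcases mul_eq_zero.1 h0 with h | h
    · rw [hu] at h; linarith
    · exact absurd h hP.ne'
  · intro ht
    have huz : u = 0 := by rw [hu]; linarith
    rw [huz, zero_mul] at hG
    linarith

theorem riesz_mean_neumann_S2_hemisphere_bounds :
    (∀ z : ℝ, 0 ≤ z →
      (1 / 4) * z ^ 2 + (1 / 3) * z * Real.sqrt (z + 1 / 4) ≤ R1NS2 z ∧
      R1NS2 z ≤ (1 / 4) * z ^ 2 + (1 / 3) * z * Real.sqrt (z + 1 / 4) + z) ∧
    (∀ z : ℝ, 0 ≤ z →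
      ((1 / 4) * z ^ 2 + (1 / 3) * z * Real.sqrt (z + 1 / 4) = R1NS2 z ↔
        ∃ l : ℕ, z = (l : ℝ) * ((l : ℝ) + 1))) := by
  constructor
  · intro z hz
    obtain ⟨n, hn1, hR, hn2, hn3⟩ := master z hz
    have ht2 : (Real.sqrt (z + 1 / 4)) ^ 2 = z + 1 / 4 := Real.sq_sqrt (by linarith)
    obtain ⟨hlow, hup, _⟩ := arith_ineqs (Real.sqrt (z + 1 / 4)) n z
      (by exact_mod_cast hn1) hn2 hn3 ht2
    rw [hR]
    constructor <;> [linarith; linarith]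
  · intro z hz
    obtain ⟨n, hn1, hR, hn2, hn3⟩ := master z hz
    have ht2 : (Real.sqrt (z + 1 / 4)) ^ 2 = z + 1 / 4 := Real.sq_sqrt (by linarith)
    obtain ⟨hlow, hup, hiff⟩ := arith_ineqs (Real.sqrt (z + 1 / 4)) n z
      (by exact_mod_cast hn1) hn2 hn3 ht2
    rw [hR]
    constructor
    · intro heq
      have ht : Real.sqrt (z + 1 / 4) = (n : ℝ) - 1 / 2 := hiff.1 (by linarith)
      refine ⟨n - 1, ?_⟩
      have hcast : ((n - 1 : ℕ) : ℝ) = (n : ℝ) - 1 := by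
        rw [Nat.cast_sub hn1]; norm_num
      rw [hcast]
      nlinarith [ht2]
    · rintro ⟨l, hl⟩
      have hsq : z + 1 / 4 = ((l : ℝ) + 1 / 2) ^ 2 := by rw [hl]; ring
      have ht : Real.sqrt (z + 1 / 4) = (l : ℝ) + 1 / 2 := by
        rw [hsq, Real.sqrt_sq (by positivity)]
      rw [ht] at hn2 hn3
      have h1 : n ≤ l + 1 := by exact_mod_cast (by push_cast; linarith : (n : ℝ) ≤ (l + 1 : ℕ))
      have h2 : l < n := by exact_mod_cast (by linarith : (l : ℝ) < (n : ℕ))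
      have hne : n = l + 1 := le_antisymm h1 h2
      have : Real.sqrt (z + 1 / 4) = (n : ℝ) - 1 / 2 := by
        rw [ht, hne]; push_cast; ring
      have := hiff.2 this
      linarith
end

section
/- For every real z ≥ 0 one has ∑_{l=1}^∞ (2l+1)·max(z − l(l+1), 0) ≤ (1/2)·(z − 1/2)². -/
lemma sum_exact (z : ℝ) : ∀ N : ℕ, (N : ℝ) * ((N : ℝ) + 1) ≤ z →
    ∑ l ∈ Finset.range N, (2 * ((l : ℝ) + 1) + 1) * max (z - ((l : ℝ) + 1) * ((l : ℝ) + 2)) 0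
      = z * (((N : ℝ) + 1) ^ 2 - 1) - (N : ℝ) * ((N : ℝ) + 1) ^ 2 * ((N : ℝ) + 2) / 2 := by
  intro N
  induction N with
  | zero => intro _; simp
  | succ N ih =>
    intro h
    have hN : (N : ℝ) * ((N : ℝ) + 1) ≤ z := by
      push_cast at h ⊢
      nlinarith [Nat.cast_nonneg (α := ℝ) N]
    have hmax : max (z - ((N : ℝ) + 1) * ((N : ℝ) + 2)) 0
        = z - ((N : ℝ) + 1) * ((N : ℝ) + 2) := by
      push_cast at h
      rw [max_eq_left]
      linarith
    rw [Finset.sum_range_succ, ih hN, hmax]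
    push_cast
    ring

lemma partial_sum_bound (z : ℝ) (hz : 0 ≤ z) : ∀ N : ℕ,
    ∑ l ∈ Finset.range N, (2 * ((l : ℝ) + 1) + 1) * max (z - ((l : ℝ) + 1) * ((l : ℝ) + 2)) 0
      ≤ (1 / 2) * (z - 1 / 2) ^ 2 := by
  intro N
  induction N with
  | zero => simp; positivity
  | succ N ih =>
    by_cases h : z < ((N : ℝ) + 1) * ((N : ℝ) + 2)
    · rw [Finset.sum_range_succ]
      have : max (z - ((N : ℝ) + 1) * ((N : ℝ) + 2)) 0 = 0 := by
        rw [max_eq_right]; linarith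
      rw [this]
      simpa using ih
    · push_neg at h
      have h' : ((N + 1 : ℕ) : ℝ) * (((N + 1 : ℕ) : ℝ) + 1) ≤ z := by push_cast; linarith
      rw [sum_exact z (N + 1) h']
      push_cast
      nlinarith [sq_nonneg (z - ((N : ℝ) + 2) ^ 2 + 1 / 2)]

/-- For every real `z ≥ 0`, the sum over integers `l ≥ 1` of
`(2l+1)·max(z − l(l+1), 0)` is at most `(1/2)·(z − 1/2)²`. The sum over `l ≥ 1` is
written as a sum over `l ∈ ℕ` with the index shifted by one. -/
theorem sum_bound_shifted (z : ℝ) (hz : 0 ≤ z) :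
    ∑' l : ℕ, (2 * ((l : ℝ) + 1) + 1) * max (z - ((l : ℝ) + 1) * ((l : ℝ) + 2)) 0 ≤
      (1 / 2) * (z - 1 / 2) ^ 2 := by
  have key : ∀ l : ℕ, l ∉ Finset.range ⌈z⌉₊ →
      (2 * ((l : ℝ) + 1) + 1) * max (z - ((l : ℝ) + 1) * ((l : ℝ) + 2)) 0 = 0 := by
    intro l hl
    simp only [Finset.mem_range, not_lt] at hl
    have h1 : z ≤ (l : ℝ) + 1 := by
      have := Nat.ceil_le_floor_add_one z
      have h2 : z ≤ (⌈z⌉₊ : ℝ) := Nat.le_ceil z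
      have : ((⌈z⌉₊ : ℕ) : ℝ) ≤ (l : ℝ) := by exact_mod_cast hl
      linarith
    have : max (z - ((l : ℝ) + 1) * ((l : ℝ) + 2)) 0 = 0 := by
      rw [max_eq_right]
      nlinarith [Nat.cast_nonneg (α := ℝ) l]
    rw [this, mul_zero]
  rw [tsum_eq_sum key]
  exact partial_sum_bound z hz ⌈z⌉₊
end

section
/- For all integers d ≥ 2 and L ≥ 0 and every real z, the following identity holds: ∑_{l=0}^{L} m_{l,d}·(z − l(l+d−1)) = ((2L+d)·(L+d−1)! / ((d+2)·L!·d!))·(−d·L·(L+d) + (d+2)·z). -/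
/-- Multiplicity of the eigenvalue `l(l+d−1)` of the Laplacian on the `d`-sphere:
`m_{l,d} = C(d+l, l) − C(d+l−2, l−2)`, the second term being `0` for `l < 2`. -/
noncomputable def sphereMult (d l : ℕ) : ℝ :=
  (Nat.choose (d + l) l : ℝ) - if 2 ≤ l then (Nat.choose (d + l - 2) (l - 2) : ℝ) else 0

lemma sphereMult_succ (d L : ℕ) (hd : 2 ≤ d) :
    sphereMult d (L + 1) =
      (((d:ℝ) + L + 1) * ((d:ℝ) + L) - (L:ℝ) * ((L:ℝ) + 1)) *
          (Nat.factorial (L + d - 1) : ℝ) /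
        ((Nat.factorial (L + 1) : ℝ) * (Nat.factorial d : ℝ)) := by
  unfold sphereMult
  have hfd : (Nat.factorial d : ℝ) ≠ 0 := Nat.cast_ne_zero.mpr (Nat.factorial_ne_zero d)
  have hfL1 : (Nat.factorial (L+1) : ℝ) ≠ 0 := Nat.cast_ne_zero.mpr (Nat.factorial_ne_zero _)
  rcases Nat.eq_zero_or_pos L with h | h
  · subst h
    rw [if_neg (by omega)]
    have h1 : d + 1 = (d - 1 + 1) + 1 := by omega
    have hc : (Nat.choose (d + 1) 1 : ℝ) = (d : ℝ) + 1 := by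
      rw [Nat.choose_one_right]; push_cast; ring
    have hfac : (Nat.factorial d : ℝ) = (d : ℝ) * (Nat.factorial (d - 1) : ℝ) := by
      conv_lhs => rw [show d = (d - 1) + 1 by omega, Nat.factorial_succ]
      rw [show d - 1 + 1 = d by omega]
      push_cast
      ring
    simp only [Nat.zero_add, Nat.add_zero] at *
    rw [hc, Nat.factorial_one, hfac]
    have hd0 : (d : ℝ) ≠ 0 := by positivity
    have hfd1 : (Nat.factorial (d-1) : ℝ) ≠ 0 := Nat.cast_ne_zero.mpr (Nat.factorial_ne_zero _)
    field_simp
    push_cast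
    ring
  · rw [if_pos (by omega)]
    have hc1 : (Nat.choose (d + (L + 1)) (L + 1) : ℝ) =
        (Nat.factorial (d + L + 1) : ℝ) / ((Nat.factorial (L+1) : ℝ) * (Nat.factorial d : ℝ)) := by
      rw [Nat.cast_choose ℝ (by omega : L + 1 ≤ d + (L+1)),
        show d + (L + 1) - (L + 1) = d by omega, show d + (L + 1) = d + L + 1 by omega]
    have hc2 : (Nat.choose (d + (L + 1) - 2) (L + 1 - 2) : ℝ) =
        (Nat.factorial (d + L - 1) : ℝ) / ((Nat.factorial (L-1) : ℝ) * (Nat.factorial d : ℝ)) := by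
      rw [show d + (L+1) - 2 = d + L - 1 by omega, show L + 1 - 2 = L - 1 by omega]
      rw [Nat.cast_choose ℝ (by omega : L - 1 ≤ d + L - 1),
        show d + L - 1 - (L - 1) = d by omega]
    have hf1 : (Nat.factorial (d + L + 1) : ℝ) =
        ((d:ℝ) + L + 1) * ((d:ℝ) + L) * (Nat.factorial (L + d - 1) : ℝ) := by
      rw [show d + L + 1 = (d + L - 1 + 1) + 1 by omega, Nat.factorial_succ, Nat.factorial_succ]
      rw [show d + L - 1 + 1 = d + L by omega, show d + L - 1 = L + d - 1 by omega]
      push_cast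
      ring
    have hf2 : (Nat.factorial (L + 1) : ℝ) =
        ((L:ℝ) + 1) * (L:ℝ) * (Nat.factorial (L - 1) : ℝ) := by
      rw [Nat.factorial_succ, show L = (L - 1) + 1 by omega, Nat.factorial_succ]
      rw [show L - 1 + 1 = L by omega]
      push_cast
      ring
    have hf3 : (Nat.factorial (d + L - 1) : ℝ) = (Nat.factorial (L + d - 1) : ℝ) := by
      rw [show d + L - 1 = L + d - 1 by omega]
    rw [hc1, hc2, hf1, hf3, hf2]
    have hL0 : (L : ℝ) ≠ 0 := by positivity
    have hfL : (Nat.factorial (L-1) : ℝ) ≠ 0 := Nat.cast_ne_zero.mpr (Nat.factorial_ne_zero _)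
    field_simp

theorem riesz_mean_sphere_identity (d L : ℕ) (hd : 2 ≤ d) (z : ℝ) :
    ∑ l ∈ Finset.range (L + 1),
        sphereMult d l * (z - (l : ℝ) * ((l : ℝ) + (d : ℝ) - 1)) =
      ((2 * (L : ℝ) + (d : ℝ)) * (Nat.factorial (L + d - 1) : ℝ) /
          (((d : ℝ) + 2) * (Nat.factorial L : ℝ) * (Nat.factorial d : ℝ))) *
        (-(d : ℝ) * (L : ℝ) * ((L : ℝ) + (d : ℝ)) + ((d : ℝ) + 2) * z) := by
  have hfd : (Nat.factorial d : ℝ) ≠ 0 := Nat.cast_ne_zero.mpr (Nat.factorial_ne_zero d)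
  have hd2 : (d : ℝ) + 2 ≠ 0 := by positivity
  induction L with
  | zero =>
    simp only [zero_add, Finset.sum_range_one, sphereMult]
    rw [if_neg (show ¬ (2 ≤ 0) by omega)]
    have hfac : (Nat.factorial d : ℝ) = (d : ℝ) * (Nat.factorial (d - 1) : ℝ) := by
      conv_lhs => rw [show d = (d - 1) + 1 by omega, Nat.factorial_succ]
      rw [show d - 1 + 1 = d by omega]
      push_cast
      ring
    simp only [Nat.add_zero, Nat.choose_zero_right, Nat.factorial_zero, Nat.zero_add,
      Nat.cast_zero, Nat.cast_one]
    rw [hfac]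
    have hd0 : (d : ℝ) ≠ 0 := by positivity
    have hfd1 : (Nat.factorial (d-1) : ℝ) ≠ 0 := Nat.cast_ne_zero.mpr (Nat.factorial_ne_zero _)
    push_cast
    field_simp
    ring
  | succ L ih =>
    rw [Finset.sum_range_succ, ih, sphereMult_succ d L hd]
    have hfL : (Nat.factorial L : ℝ) ≠ 0 := Nat.cast_ne_zero.mpr (Nat.factorial_ne_zero _)
    have hf1 : (Nat.factorial (L + 1 + d - 1) : ℝ) =
        ((L:ℝ) + d) * (Nat.factorial (L + d - 1) : ℝ) := by
      rw [show L + 1 + d - 1 = (L + d - 1) + 1 by omega, Nat.factorial_succ]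
      rw [show L + d - 1 + 1 = L + d by omega]
      push_cast
      ring
    have hf2 : (Nat.factorial (L + 1) : ℝ) = ((L:ℝ) + 1) * (Nat.factorial L : ℝ) := by
      rw [Nat.factorial_succ]; push_cast; ring
    rw [hf1, hf2]
    have hL1 : (L : ℝ) + 1 ≠ 0 := by positivity
    have hfLd : (Nat.factorial (L + d - 1) : ℝ) ≠ 0 := Nat.cast_ne_zero.mpr (Nat.factorial_ne_zero _)
    push_cast
    field_simp
    ring
end

section
/- For every integer d ≥ 2 and every real z ≥ 0, the first Riesz-mean of the Laplacian eigenvalues on the d-sphere satisfies R₁(z) ≥ (4/((d+2)·d!))·z^{d/2+1}. -/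
/-- First Riesz-mean of the Laplacian eigenvalues on the `d`-sphere. -/
noncomputable def R1Sd (d : ℕ) (z : ℝ) : ℝ :=
  ∑' l : ℕ, sphereMult d l * max (z - (l : ℝ) * ((l : ℝ) + (d : ℝ) - 1)) 0

/-!
Between consecutive eigenvalues `λ_L ≤ z ≤ λ_{L+1}` (where `λ_l = l(l+d-1)`) the Riesz mean
is affine in `z`, while `z ^ (d/2+1)` is convex, so it suffices to prove the bound at `z = λ_n`.
With `P(x) = x(x+1)⋯(x+d-1)` one has `d! m_l = P(l+1) - P(l-1)`, so the counting function
telescopes to `d! ∑_{k ≤ l} m_k = P(l+1) + P(l)`, and summation by parts gives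
`d! R₁(λ_n) = ∑_{l<n} (λ_{l+1} - λ_l)(P(l+1) + P(l))`. Each term dominates
`4/(d+2) (λ_{l+1}^{d/2+1} - λ_l^{d/2+1})`: by the trapezoid rule for the convex function
`t ^ (d/2)` this is at most `(λ_{l+1} - λ_l)(λ_{l+1}^{d/2} + λ_l^{d/2})`, and
`λ(x)^{d/2} ≤ P(x)` because `(x+j)(x+d-1-j) ≥ x(x+d-1)` for every pair of factors of `P(x)^2`.
-/

open Finset Set Polynomial
open scoped Nat

theorem ConvexOn.le_of_concaveOn_of_le_of_le {f g : ℝ → ℝ} {u v z : ℝ}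
    (hf : ConvexOn ℝ (Icc u v) f) (hg : ConcaveOn ℝ (Icc u v) g)
    (hu : f u ≤ g u) (hv : f v ≤ g v) (hz : z ∈ Icc u v) : f z ≤ g z := by
  have huv : u ≤ v := hz.1.trans hz.2
  have := (hf.sub hg).le_on_segment (left_mem_Icc.2 huv) (right_mem_Icc.2 huv)
    (by rwa [segment_eq_Icc huv])
  simp only [Pi.sub_apply] at this
  linarith [max_le (sub_nonpos.2 hu) (sub_nonpos.2 hv)]

theorem concaveOn_mul_add (a b : ℝ) {s : Set ℝ} (hs : Convex ℝ s) :
    ConcaveOn ℝ s fun x => a * x + b :=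
  ((LinearMap.mul ℝ ℝ a).concaveOn hs).add_const b

theorem ConvexOn.intervalIntegral_le_trapezoid {f : ℝ → ℝ} {a b : ℝ} (hab : a ≤ b)
    (hf : ConvexOn ℝ (Icc a b) f) (hfi : IntervalIntegrable f MeasureTheory.volume a b) :
    ∫ x in a..b, f x ≤ (b - a) * (f a + f b) / 2 := by
  rcases hab.eq_or_lt with rfl | hlt
  · simp
  set s := (f b - f a) / (b - a)
  have hchord : ∀ x ∈ Icc a b, f x ≤ s * x + (f a - s * a) := fun x hx =>
    hf.le_of_concaveOn_of_le_of_le (concaveOn_mul_add _ _ (convex_Icc a b))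
      (by linarith) (by simp only [s]; field_simp; linarith) hx
  calc ∫ x in a..b, f x ≤ ∫ x in a..b, (s * x + (f a - s * a)) :=
        intervalIntegral.integral_mono_on hab hfi
          (by apply Continuous.intervalIntegrable; fun_prop) hchord
    _ = (b - a) * (f a + f b) / 2 := by
        rw [intervalIntegral.integral_add (by apply Continuous.intervalIntegrable; fun_prop)
          intervalIntegrable_const, intervalIntegral.integral_const_mul, integral_id,
          intervalIntegral.integral_const, smul_eq_mul]
        simp only [s]
        field_simp
        ring

theorem rpow_add_one_sub_rpow_add_one_le {q a b : ℝ} (hq : 1 ≤ q) (ha : 0 ≤ a)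
    (hab : a ≤ b) :
    b ^ (q + 1) - a ^ (q + 1) ≤ (q + 1) / 2 * (b - a) * (b ^ q + a ^ q) := by
  have hint := integral_rpow (a := a) (b := b) (r := q) (Or.inl (by linarith))
  have htrap := ((convexOn_rpow hq).subset (Icc_subset_Ici_self.trans (Ici_subset_Ici.2 ha))
    (convex_Icc a b)).intervalIntegral_le_trapezoid hab
    (intervalIntegral.intervalIntegrable_rpow' (by linarith))
  rw [hint, div_le_iff₀ (by linarith)] at htrap
  linarith

theorem exists_mem_Icc_succ_of_le_of_lt {f : ℕ → ℝ} {z : ℝ} (h0 : f 0 ≤ z) {n : ℕ}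
    (hn : z < f n) : ∃ L, z ∈ Icc (f L) (f (L + 1)) := by
  induction n with
  | zero => exact absurd hn h0.not_gt
  | succ n ih =>
    by_cases h : f n ≤ z
    · exact ⟨n, h, hn.le⟩
    · exact ih (not_le.1 h)

theorem sum_range_succ_mul_sub_eq (m e : ℕ → ℝ) (n : ℕ) :
    ∑ l ∈ range (n + 1), m l * (e n - e l) =
      ∑ l ∈ range n, (e (l + 1) - e l) * ∑ k ∈ range (l + 1), m k := by
  induction n with
  | zero => simp
  | succ n ih =>
    rw [sum_range_succ _ n, ← ih, sum_range_succ _ (n + 1), sub_self, mul_zero, add_zero,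
      mul_sum, ← sum_add_distrib]
    exact sum_congr rfl fun l _ => by ring

noncomputable def rieszMean (m e : ℕ → ℝ) (z : ℝ) : ℝ :=
  ∑' l, m l * max (z - e l) 0

section RieszMean

variable {m e : ℕ → ℝ}

theorem rieszMean_eq_sum_of_mem_Icc (he : Monotone e) {L : ℕ} {z : ℝ}
    (hz : z ∈ Icc (e L) (e (L + 1))) :
    rieszMean m e z = ∑ l ∈ range (L + 1), m l * (z - e l) := by
  rw [rieszMean, tsum_eq_sum (s := range (L + 1))]
  · refine sum_congr rfl fun l hl => ?_
    rw [max_eq_left (sub_nonneg.2 ((he (Nat.lt_succ_iff.1 (mem_range.1 hl))).trans hz.1))]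
  · intro l hl
    rw [max_eq_right (sub_nonpos.2 (hz.2.trans (he (not_lt.1 (mt mem_range.2 hl))))), mul_zero]

theorem concaveOn_rieszMean_Icc (he : Monotone e) (L : ℕ) :
    ConcaveOn ℝ (Icc (e L) (e (L + 1))) (rieszMean m e) := by
  refine (concaveOn_mul_add (∑ l ∈ range (L + 1), m l) (-∑ l ∈ range (L + 1), m l * e l)
    (convex_Icc _ _)).congr fun z hz => ?_
  simp only [rieszMean_eq_sum_of_mem_Icc he hz, mul_sub, sum_sub_distrib, sum_mul]
  ring

theorem rieszMean_apply_eq_sum (he : Monotone e) (n : ℕ) :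
    rieszMean m e (e n) = ∑ l ∈ range n, (e (l + 1) - e l) * ∑ k ∈ range (l + 1), m k := by
  rw [rieszMean_eq_sum_of_mem_Icc he ⟨le_rfl, he n.le_succ⟩, sum_range_succ_mul_sub_eq]

end RieszMean

theorem ascPochhammer_eval_eq_prod_range {R : Type*} [CommSemiring R] (n : ℕ) (r : R) :
    (ascPochhammer R n).eval r = ∏ j ∈ range n, (r + j) := by
  induction n with
  | zero => simp
  | succ n ih => rw [ascPochhammer_succ_eval, ih, prod_range_succ]

theorem choose_mul_factorial_eq_ascPochhammer_eval (d n : ℕ) :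
    ((d + n).choose n : ℝ) * d ! = (ascPochhammer ℝ d).eval ((n : ℝ) + 1) := by
  rw [← Nat.cast_add_one, ← ascPochhammer_eval_cast, ascPochhammer_nat_eq_ascFactorial,
    Nat.ascFactorial_eq_factorial_mul_choose, add_comm n, Nat.choose_symm_add, mul_comm]
  push_cast
  rfl

theorem ascPochhammer_eval_neg_one {d : ℕ} (hd : 2 ≤ d) :
    (ascPochhammer ℝ d).eval (-1) = 0 :=
  (ascPochhammer_eval_eq_prod_range d (-1 : ℝ)).trans
    (prod_eq_zero (i := 1) (mem_range.2 hd) (by norm_num))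

noncomputable def sphereEigenvalue (d : ℕ) (x : ℝ) : ℝ := x * (x + d - 1)

theorem R1Sd_eq_rieszMean (d : ℕ) :
    R1Sd d = rieszMean (sphereMult d) fun l => sphereEigenvalue d l :=
  rfl

section Sphere

variable {d : ℕ}

theorem sphereEigenvalue_add_one_sub (d : ℕ) (x : ℝ) :
    sphereEigenvalue d (x + 1) - sphereEigenvalue d x = 2 * x + d := by
  simp only [sphereEigenvalue]
  ring

theorem sphereEigenvalue_nonneg (hd : 1 ≤ d) {x : ℝ} (hx : 0 ≤ x) :
    0 ≤ sphereEigenvalue d x :=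
  mul_nonneg hx (by have : (1 : ℝ) ≤ d := mod_cast hd; linarith)

theorem monotone_sphereEigenvalue (d : ℕ) : Monotone fun l : ℕ => sphereEigenvalue d l :=
  monotone_nat_of_le_succ fun l => by
    have := sphereEigenvalue_add_one_sub d l
    push_cast
    linarith [(by positivity : (0 : ℝ) ≤ 2 * l + d)]

theorem exists_mem_Icc_sphereEigenvalue (d : ℕ) {z : ℝ} (hz : 0 ≤ z) :
    ∃ L : ℕ, z ∈ Icc (sphereEigenvalue d L) (sphereEigenvalue d (L + 1 : ℕ)) := by
  refine exists_mem_Icc_succ_of_le_of_lt (f := fun l : ℕ => sphereEigenvalue d l)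
    (by simpa [sphereEigenvalue]) (n := ⌈z⌉₊ + 2) ?_
  have := Nat.le_ceil z
  simp only [sphereEigenvalue]
  push_cast
  nlinarith

theorem sphereEigenvalue_pow_le_sq_ascPochhammer_eval (d : ℕ) {x : ℝ} (hx : 0 ≤ x) :
    sphereEigenvalue d x ^ d ≤ (ascPochhammer ℝ d).eval x ^ 2 := by
  rw [ascPochhammer_eval_eq_prod_range, sq]
  nth_rewrite 2 [← prod_range_reflect]
  rw [← prod_mul_distrib]
  calc sphereEigenvalue d x ^ d = ∏ _j ∈ range d, sphereEigenvalue d x := by simp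
    _ ≤ _ := by
      refine prod_le_prod
        (fun j hj => sphereEigenvalue_nonneg (Nat.one_le_of_lt (mem_range.1 hj)) hx) fun j hj => ?_
      have hj : j + 1 ≤ d := mem_range.1 hj
      have hcast : ((d - 1 - j : ℕ) : ℝ) = d - 1 - j := by
        rw [Nat.cast_sub (by omega : j ≤ d - 1), Nat.cast_sub (by omega : 1 ≤ d), Nat.cast_one]
      rw [hcast, sphereEigenvalue]
      have : (j : ℝ) + 1 ≤ d := mod_cast hj
      nlinarith [(by positivity : (0 : ℝ) ≤ j)]

theorem sphereEigenvalue_rpow_le_ascPochhammer_eval (hd : 1 ≤ d) {x : ℝ} (hx : 0 ≤ x) :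
    sphereEigenvalue d x ^ ((d : ℝ) / 2) ≤ (ascPochhammer ℝ d).eval x := by
  have hP : 0 ≤ (ascPochhammer ℝ d).eval x := by
    rw [ascPochhammer_eval_eq_prod_range]; positivity
  have hev := sphereEigenvalue_nonneg hd hx
  refine (pow_le_pow_iff_left₀ (Real.rpow_nonneg hev _) hP two_ne_zero).1 ?_
  rw [← Real.rpow_natCast, ← Real.rpow_mul hev]
  simpa using sphereEigenvalue_pow_le_sq_ascPochhammer_eval d hx

theorem sphereMult_mul_factorial (hd : 2 ≤ d) (l : ℕ) :
    sphereMult d l * d ! =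
      (ascPochhammer ℝ d).eval ((l : ℝ) + 1) - (ascPochhammer ℝ d).eval ((l : ℝ) - 1) := by
  rw [sphereMult, sub_mul, choose_mul_factorial_eq_ascPochhammer_eval]
  split_ifs with hl
  · obtain ⟨k, rfl⟩ := Nat.exists_eq_add_of_le' hl
    rw [show d + (k + 2) - 2 = d + k by omega, Nat.add_sub_cancel,
      choose_mul_factorial_eq_ascPochhammer_eval]
    push_cast
    ring_nf
  · interval_cases l
    · simp [ascPochhammer_eval_neg_one hd]
    · simp [show d ≠ 0 by omega]

theorem sum_sphereMult_mul_factorial (hd : 2 ≤ d) (n : ℕ) :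
    (∑ l ∈ range (n + 1), sphereMult d l) * d ! =
      (ascPochhammer ℝ d).eval ((n : ℝ) + 1) + (ascPochhammer ℝ d).eval (n : ℝ) := by
  induction n with
  | zero =>
    simp [sphereMult_mul_factorial hd, ascPochhammer_eval_neg_one hd, show d ≠ 0 by omega]
  | succ n ih =>
    rw [sum_range_succ, add_mul, ih, sphereMult_mul_factorial hd]
    push_cast
    ring_nf

theorem weyl_increment_le (hd : 2 ≤ d) {x : ℝ} (hx : 0 ≤ x) :
    4 / ((d : ℝ) + 2) * (sphereEigenvalue d (x + 1) ^ ((d : ℝ) / 2 + 1) -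
        sphereEigenvalue d x ^ ((d : ℝ) / 2 + 1)) ≤
      (sphereEigenvalue d (x + 1) - sphereEigenvalue d x) *
        ((ascPochhammer ℝ d).eval (x + 1) + (ascPochhammer ℝ d).eval x) := by
  have hd' : (2 : ℝ) ≤ d := mod_cast hd
  have hgap : 0 ≤ sphereEigenvalue d (x + 1) - sphereEigenvalue d x := by
    rw [sphereEigenvalue_add_one_sub]; positivity
  have htrap := rpow_add_one_sub_rpow_add_one_le (q := (d : ℝ) / 2) (by linarith)
    (sphereEigenvalue_nonneg (by omega) hx) (sub_nonneg.1 hgap)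
  have h1 := sphereEigenvalue_rpow_le_ascPochhammer_eval (d := d) (by omega)
    (by linarith : 0 ≤ x + 1)
  have h0 := sphereEigenvalue_rpow_le_ascPochhammer_eval (d := d) (by omega) hx
  calc _ ≤ 4 / ((d : ℝ) + 2) * (((d : ℝ) / 2 + 1) / 2 *
          (sphereEigenvalue d (x + 1) - sphereEigenvalue d x) *
          (sphereEigenvalue d (x + 1) ^ ((d : ℝ) / 2) +
            sphereEigenvalue d x ^ ((d : ℝ) / 2))) := by
        gcongr
    _ = (sphereEigenvalue d (x + 1) - sphereEigenvalue d x) *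
          (sphereEigenvalue d (x + 1) ^ ((d : ℝ) / 2) +
            sphereEigenvalue d x ^ ((d : ℝ) / 2)) := by
        field_simp
        ring
    _ ≤ _ := by gcongr

theorem weyl_lower_bound_at_sphereEigenvalue (hd : 2 ≤ d) (n : ℕ) :
    4 / (((d : ℝ) + 2) * d !) * sphereEigenvalue d n ^ ((d : ℝ) / 2 + 1) ≤
      R1Sd d (sphereEigenvalue d n) := by
  have htel : sphereEigenvalue d n ^ ((d : ℝ) / 2 + 1) = ∑ l ∈ range n,
      (sphereEigenvalue d (l + 1 : ℕ) ^ ((d : ℝ) / 2 + 1) -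
        sphereEigenvalue d l ^ ((d : ℝ) / 2 + 1)) := by
    rw [sum_range_sub (fun l : ℕ => sphereEigenvalue d l ^ ((d : ℝ) / 2 + 1))]
    simp [sphereEigenvalue, Real.zero_rpow (by positivity : (d : ℝ) / 2 + 1 ≠ 0)]
  rw [R1Sd_eq_rieszMean, rieszMean_apply_eq_sum (monotone_sphereEigenvalue d), htel, mul_sum]
  refine sum_le_sum fun l _ => ?_
  have hN := sum_sphereMult_mul_factorial hd l
  push_cast
  calc _ = 4 / ((d : ℝ) + 2) * (sphereEigenvalue d (l + 1) ^ ((d : ℝ) / 2 + 1) -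
        sphereEigenvalue d l ^ ((d : ℝ) / 2 + 1)) / d ! := by
        field_simp
    _ ≤ (sphereEigenvalue d (l + 1) - sphereEigenvalue d l) *
          ((ascPochhammer ℝ d).eval ((l : ℝ) + 1) + (ascPochhammer ℝ d).eval (l : ℝ)) /
        d ! := by
        gcongr ?_ / _
        exact weyl_increment_le hd l.cast_nonneg
    _ = _ := by
        rw [← hN]
        field_simp

end Sphere

theorem riesz_mean_sphere_weyl_lower_bound (d : ℕ) (hd : 2 ≤ d) (z : ℝ) (hz : 0 ≤ z) :
    R1Sd d z ≥ 4 / (((d : ℝ) + 2) * (Nat.factorial d : ℝ)) * z ^ ((d : ℝ) / 2 + 1) := by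
  obtain ⟨L, hL⟩ := exists_mem_Icc_sphereEigenvalue d hz
  have hconv : ConvexOn ℝ (Icc (sphereEigenvalue d L) (sphereEigenvalue d (L + 1 : ℕ)))
      fun x => 4 / (((d : ℝ) + 2) * d !) * x ^ ((d : ℝ) / 2 + 1) :=
    ((convexOn_rpow (le_add_of_nonneg_left (by positivity))).smul (by positivity)).subset
      (Icc_subset_Ici_self.trans
        (Ici_subset_Ici.2 (sphereEigenvalue_nonneg (by omega) L.cast_nonneg)))
      (convex_Icc _ _)
  exact hconv.le_of_concaveOn_of_le_of_le
    (concaveOn_rieszMean_Icc (monotone_sphereEigenvalue d) L)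
    (weyl_lower_bound_at_sphereEigenvalue hd L) (weyl_lower_bound_at_sphereEigenvalue hd (L + 1))
    hL
end

section
/- For every integer d ≥ 2 and every real z ≥ 0, the first Riesz-mean of the Laplacian eigenvalues on the d-sphere satisfies R₁(z) ≤ (4/((d+2)·d!))·(z + d(2d−1)/12)^{d/2+1}. -/
open Finset

noncomputable def Pprod (d L : ℕ) : ℝ := ∏ j ∈ Finset.range (d-1), ((L:ℝ) + 1 + (j:ℝ))

lemma Pprod_pos (d L : ℕ) : 0 < Pprod d L := by
  apply Finset.prod_pos; intro j _; positivity

lemma Pprod_zero (d : ℕ) : Pprod d 0 = ((d-1).factorial : ℝ) := by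
  rw [Pprod, ← Finset.prod_range_add_one_eq_factorial (d-1)]
  push_cast; apply Finset.prod_congr rfl; intro j _; ring

lemma Pprod_rec (d L : ℕ) (hd : 2 ≤ d) :
    ((L:ℝ)+1) * Pprod d (L+1) = ((L:ℝ)+(d:ℝ)) * Pprod d L := by
  obtain ⟨k, hk⟩ : ∃ k, d - 1 = k + 1 := ⟨d - 2, by omega⟩
  have hdk : (d:ℝ) = (k:ℝ) + 2 := by
    have : d = k + 2 := by omega
    rw [this]; push_cast; ring
  rw [Pprod, Pprod, hk, Finset.prod_range_succ, Finset.prod_range_succ']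
  have h1 : ∀ j ∈ Finset.range k, (((L+1:ℕ)):ℝ) + 1 + (j:ℝ) = ((L:ℝ) + 1 + ((j+1:ℕ):ℝ)) := by
    intro j _; push_cast; ring
  rw [Finset.prod_congr rfl h1]
  push_cast [hdk]; ring

lemma fact_pred (d : ℕ) (hd : 2 ≤ d) : (d:ℝ) * ((d-1).factorial : ℝ) = (d.factorial : ℝ) := by
  obtain ⟨k, hk⟩ : ∃ k, d = k + 1 := ⟨d - 1, by omega⟩
  subst hk
  rw [Nat.factorial_succ]
  push_cast; ring

lemma choose_mul_factorial (d : ℕ) (hd : 2 ≤ d) :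
    ∀ L, (((d+L).choose L : ℕ) : ℝ) * (d.factorial : ℝ) = ((L:ℝ)+(d:ℝ)) * Pprod d L := by
  intro L
  induction L with
  | zero => simp [Pprod_zero, ← fact_pred d hd]
  | succ L ih =>
    have h := Nat.add_one_mul_choose_eq (d+L) L
    have hcast : ((d:ℝ)+L+1) * (((d+L).choose L : ℕ):ℝ)
        = (((d+L+1).choose (L+1) : ℕ):ℝ) * ((L:ℝ)+1) := by exact_mod_cast h
    have key := Pprod_rec d L hd
    have hL1 : ((L:ℝ)+1) ≠ 0 := by positivity
    have hidx : d + (L+1) = (d+L)+1 := by omega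
    rw [hidx]
    apply mul_left_cancel₀ hL1
    push_cast at hcast ⊢
    linear_combination (-(d.factorial:ℝ)) * hcast + ((d:ℝ)+L+1) * ih - ((L:ℝ)+1+(d:ℝ)) * key

lemma sphereMult_zero (d : ℕ) : sphereMult d 0 = 1 := by simp [sphereMult]

lemma sphereMult_one (d : ℕ) : sphereMult d 1 = (d:ℝ) + 1 := by
  simp [sphereMult, Nat.choose_one_right]

lemma sphereMult_add_two (d : ℕ) (hd : 2 ≤ d) (k : ℕ) :
    sphereMult d (k+2) * (d.factorial : ℝ)
      = ((k:ℝ)+2+(d:ℝ)) * Pprod d (k+2) - ((k:ℝ)+(d:ℝ)) * Pprod d k := by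
  have h1 : d + (k+2) - 2 = d + k := by omega
  have h2 : k + 2 - 2 = k := by omega
  have e1 := choose_mul_factorial d hd (k+2)
  have e2 := choose_mul_factorial d hd k
  rw [sphereMult, if_pos (by omega : 2 ≤ k+2), h1, h2]
  push_cast at e1 e2 ⊢
  linear_combination e1 - e2

noncomputable def Nsum (d L : ℕ) : ℝ := ∑ l ∈ Finset.range (L+1), sphereMult d l

noncomputable def Tsum (d L : ℕ) : ℝ :=
  ∑ l ∈ Finset.range (L+1), sphereMult d l * ((l:ℝ) * ((l:ℝ) + (d:ℝ) - 1))

lemma Pprod_one (d : ℕ) (hd : 2 ≤ d) : Pprod d 1 = (d.factorial : ℝ) := by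
  have h := Pprod_rec d 0 hd
  have h0 := Pprod_zero d
  have hf := fact_pred d hd
  push_cast at h
  rw [h0] at h
  linarith [h]

lemma Nsum_mul_factorial (d : ℕ) (hd : 2 ≤ d) :
    ∀ L, Nsum d L * (d.factorial : ℝ) = (2*(L:ℝ)+(d:ℝ)) * Pprod d L := by
  intro L
  induction L with
  | zero =>
    rw [Nsum, Finset.sum_range_one, sphereMult_zero, Pprod_zero]
    push_cast
    linarith [fact_pred d hd]
  | succ L ih =>
    have hstep : Nsum d (L+1) = Nsum d L + sphereMult d (L+1) := by
      rw [Nsum, Nsum, Finset.sum_range_succ]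
    rw [hstep, add_mul, ih]
    match L with
    | 0 =>
      rw [sphereMult_one, Pprod_one d hd]
      have h0 := Pprod_zero d
      have hf := fact_pred d hd
      push_cast [h0]
      linarith
    | (k+1) =>
      have hm := sphereMult_add_two d hd k
      have r1 := Pprod_rec d (k+1) hd
      have r2 := Pprod_rec d k hd
      push_cast at hm r1 r2 ⊢
      linear_combination hm - r1 + r2

lemma Tsum_mul_factorial (d : ℕ) (hd : 2 ≤ d) :
    ∀ L, Tsum d L * (d.factorial : ℝ) * ((d:ℝ)+2)
      = (d:ℝ)*(L:ℝ)*((L:ℝ)+(d:ℝ))*(2*(L:ℝ)+(d:ℝ)) * Pprod d L := by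
  intro L
  induction L with
  | zero =>
    rw [Tsum, Finset.sum_range_one, sphereMult_zero]
    push_cast
    ring
  | succ L ih =>
    have hstep : Tsum d (L+1) = Tsum d L
        + sphereMult d (L+1) * (((L+1:ℕ):ℝ) * (((L+1:ℕ):ℝ) + (d:ℝ) - 1)) := by
      rw [Tsum, Tsum, Finset.sum_range_succ]
    rw [hstep]
    match L with
    | 0 =>
      rw [sphereMult_one, Pprod_one d hd]
      push_cast at ih ⊢
      linear_combination ih
    | (k+1) =>
      have hm := sphereMult_add_two d hd k
      have r1 := Pprod_rec d (k+1) hd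
      have r2 := Pprod_rec d k hd
      push_cast at hm ih r1 r2 ⊢
      linear_combination ih + (((k:ℝ)+2)*((k:ℝ)+(d:ℝ)+1)*((d:ℝ)+2)) * hm
        - (((k:ℝ)+2+(d:ℝ))*((k:ℝ)+1)*((d:ℝ)-2)) * r1
        + (((k:ℝ)+1+(d:ℝ))*((k:ℝ)+2)*((d:ℝ)+2)) * r2

lemma sum_id_real (n : ℕ) : ∑ j ∈ Finset.range n, (j:ℝ) = (n:ℝ)*((n:ℝ)-1)/2 := by
  induction n with
  | zero => simp
  | succ n ih => rw [Finset.sum_range_succ, ih]; push_cast; ring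

lemma sum_sq_real (n : ℕ) : ∑ j ∈ Finset.range n, (j:ℝ)^2 = (n:ℝ)*((n:ℝ)-1)*(2*(n:ℝ)-1)/6 := by
  induction n with
  | zero => simp
  | succ n ih => rw [Finset.sum_range_succ, ih]; push_cast; ring

lemma amgm_real (n : ℕ) (hn : 0 < n) (x : ℕ → ℝ) (hx : ∀ i ∈ Finset.range n, 0 ≤ x i) :
    ∏ i ∈ Finset.range n, x i ≤ ((∑ i ∈ Finset.range n, x i) / (n:ℝ)) ^ n := by
  have hn' : (0:ℝ) < (n:ℝ) := by exact_mod_cast hn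
  have h := Real.geom_mean_le_arith_mean_weighted (Finset.range n)
      (fun _ => (n:ℝ)⁻¹) x (fun i _ => by positivity)
      (by simp [Finset.sum_const, Finset.card_range]
          field_simp) hx
  have hG : (∏ i ∈ Finset.range n, x i ^ ((n:ℝ)⁻¹)) ^ n = ∏ i ∈ Finset.range n, x i := by
    rw [← Finset.prod_pow]
    apply Finset.prod_congr rfl
    intro i hi
    rw [← Real.rpow_natCast (x i ^ ((n:ℝ)⁻¹)) n, ← Real.rpow_mul (hx i hi)]
    rw [inv_mul_cancel₀ (ne_of_gt hn'), Real.rpow_one]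
  have hGnn : 0 ≤ ∏ i ∈ Finset.range n, x i ^ ((n:ℝ)⁻¹) := by
    apply Finset.prod_nonneg
    intro i hi
    exact Real.rpow_nonneg (hx i hi) _
  calc ∏ i ∈ Finset.range n, x i
      = (∏ i ∈ Finset.range n, x i ^ ((n:ℝ)⁻¹)) ^ n := hG.symm
    _ ≤ (∑ i ∈ Finset.range n, (n:ℝ)⁻¹ * x i) ^ n := by
        exact pow_le_pow_left₀ hGnn h n
    _ = ((∑ i ∈ Finset.range n, x i) / (n:ℝ)) ^ n := by
        rw [← Finset.mul_sum]
        congr 1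
        field_simp


lemma B2_le_pow (d L : ℕ) (hd : 2 ≤ d) :
    ((2*(L:ℝ)+(d:ℝ)) * Pprod d L / 2)^2
      ≤ ((L:ℝ)*((L:ℝ)+(d:ℝ)) + ((d:ℝ)+2)*(2*(d:ℝ)-1)/12)^(d:ℕ) := by
  obtain ⟨n, rfl⟩ : ∃ n, d = n + 1 := ⟨d-1, by omega⟩
  have hn : 1 ≤ n := by omega
  rw [show ((n+1:ℕ):ℝ) = (n:ℝ)+1 from by push_cast; ring]
  have hn' : (1:ℝ) ≤ (n:ℝ) := by exact_mod_cast hn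
  have hLnn : (0:ℝ) ≤ (L:ℝ) := Nat.cast_nonneg L
  set D : ℝ := ((n:ℕ):ℝ) + 1 with hD
  have hPeq : Pprod (n+1) L = ∏ j ∈ Finset.range n, ((L:ℝ)+1+(j:ℝ)) := rfl
  set x : ℕ → ℝ := fun i =>
    if i = 0 then ((2*(L:ℝ)+D)/2)^2 else ((L:ℝ)+(i:ℝ))*((L:ℝ)+D-(i:ℝ)) with hx
  have hxnn : ∀ i ∈ Finset.range (n+1), 0 ≤ x i := by
    intro i hi
    simp only [hx]
    by_cases h0 : i = 0
    · rw [if_pos h0]; positivity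
    · rw [if_neg h0]
      have hi1 : i ≤ n := by
        have := Finset.mem_range.mp hi; omega
      have hi2 : (i:ℝ) ≤ (n:ℝ) := by exact_mod_cast hi1
      have h1 : (0:ℝ) ≤ (L:ℝ) + (i:ℝ) := by positivity
      have h2 : (0:ℝ) ≤ (L:ℝ) + D - (i:ℝ) := by rw [hD]; linarith
      exact mul_nonneg h1 h2
  have hprod : ∏ i ∈ Finset.range (n+1), x i = ((2*(L:ℝ)+D) * Pprod (n+1) L / 2)^2 := by
    rw [Finset.prod_range_succ']
    have h1 : ∀ j ∈ Finset.range n,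
        x (j+1) = ((L:ℝ)+1+(j:ℝ)) * ((L:ℝ)+D-1-(j:ℝ)) := by
      intro j hj
      simp only [hx, if_neg (Nat.succ_ne_zero j)]
      push_cast; ring
    rw [Finset.prod_congr rfl h1, Finset.prod_mul_distrib]
    have h2 : ∏ j ∈ Finset.range n, ((L:ℝ)+D-1-(j:ℝ))
        = ∏ j ∈ Finset.range n, ((L:ℝ)+1+(j:ℝ)) := by
      rw [← Finset.prod_range_reflect (fun j => (L:ℝ)+1+(j:ℝ)) n]
      apply Finset.prod_congr rfl
      intro j hj
      have hj' : j < n := Finset.mem_range.mp hj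
      have h4 : ((n-1-j:ℕ):ℝ) = (n:ℝ) - 1 - (j:ℝ) := by
        rw [show n-1-j = n-(1+j) by omega, Nat.cast_sub (by omega : 1+j ≤ n)]
        push_cast; ring
      simp only [h4, hD]
      ring
    rw [h2]
    have hx0 : x 0 = ((2*(L:ℝ)+D)/2)^2 := by simp [hx]
    rw [hx0, hPeq]
    ring
  have hsum : ∑ i ∈ Finset.range (n+1), x i
      = (D) * ((L:ℝ)*((L:ℝ)+D) + (D+2)*(2*D-1)/12) := by
    rw [Finset.sum_range_succ']
    have h1 : ∀ j ∈ Finset.range n,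
        x (j+1) = (((L:ℝ)^2 + D*(L:ℝ) + (D-1)) + (D-2)*(j:ℝ)) - (j:ℝ)^2 := by
      intro j hj
      simp only [hx, if_neg (Nat.succ_ne_zero j)]
      push_cast; ring
    rw [Finset.sum_congr rfl h1, Finset.sum_sub_distrib, Finset.sum_add_distrib,
      Finset.sum_const, ← Finset.mul_sum, sum_id_real, sum_sq_real, Finset.card_range]
    have hx0 : x 0 = ((2*(L:ℝ)+D)/2)^2 := by simp [hx]
    rw [hx0, hD]
    push_cast
    ring
  have hDpos : 0 < D := by rw [hD]; positivity
  have hcast : ((n+1:ℕ):ℝ) = D := by rw [hD]; push_cast; ring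
  calc ((2*(L:ℝ)+(D)) * Pprod (n+1) L / 2)^2
      = ∏ i ∈ Finset.range (n+1), x i := hprod.symm
    _ ≤ ((∑ i ∈ Finset.range (n+1), x i)/((n+1:ℕ):ℝ))^(n+1) :=
        amgm_real (n+1) (by omega) x hxnn
    _ = ((L:ℝ)*((L:ℝ)+D) + (D+2)*(2*D-1)/12)^(n+1) := by
        rw [hsum, hcast]
        congr 1
        field_simp


set_option maxHeartbeats 1600000 in
theorem riesz_mean_sphere_shifted_upper_bound (d : ℕ) (hd : 2 ≤ d) (z : ℝ) (hz : 0 ≤ z) :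
    R1Sd d z ≤
      4 / (((d : ℝ) + 2) * (Nat.factorial d : ℝ)) *
        (z + (d : ℝ) * (2 * (d : ℝ) - 1) / 12) ^ ((d : ℝ) / 2 + 1) := by
  classical
  have hd2 : (2:ℝ) ≤ (d:ℝ) := by exact_mod_cast hd
  have hdpos : (0:ℝ) < (d:ℝ) := by linarith
  have hfac : (0:ℝ) < (d.factorial:ℝ) := by exact_mod_cast d.factorial_pos
  set c : ℝ := (d:ℝ) * (2 * (d:ℝ) - 1) / 12 with hc
  set A : ℝ := 4 / (((d:ℝ) + 2) * (Nat.factorial d : ℝ)) with hA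
  set p : ℝ := (d:ℝ) / 2 + 1 with hp
  -- choose the threshold index L
  set M : ℕ := Nat.ceil z with hM
  haveI : DecidablePred (fun l : ℕ => (l:ℝ) * ((l:ℝ) + (d:ℝ) - 1) ≤ z) :=
    fun _ => Classical.propDecidable _
  set L : ℕ := Nat.findGreatest (fun l : ℕ => (l:ℝ) * ((l:ℝ) + (d:ℝ) - 1) ≤ z) M with hL
  have hlam_mono : ∀ a b : ℕ, a ≤ b → (a:ℝ) * ((a:ℝ) + (d:ℝ) - 1) ≤ (b:ℝ) * ((b:ℝ) + (d:ℝ) - 1) := by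
    intro a b hab
    have ha : (0:ℝ) ≤ (a:ℝ) := Nat.cast_nonneg a
    have hab' : (a:ℝ) ≤ (b:ℝ) := by exact_mod_cast hab
    nlinarith
  have hlam_ge : ∀ l : ℕ, (l:ℝ) ≤ (l:ℝ) * ((l:ℝ) + (d:ℝ) - 1) := by
    intro l
    have : (0:ℝ) ≤ (l:ℝ) := Nat.cast_nonneg l
    nlinarith
  have hQ0 : ((0:ℕ):ℝ) * (((0:ℕ):ℝ) + (d:ℝ) - 1) ≤ z := by push_cast; nlinarith
  have hL_le : (L:ℝ) * ((L:ℝ) + (d:ℝ) - 1) ≤ z := by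
    rw [hL]
    exact Nat.findGreatest_spec (P := fun l : ℕ => (l:ℝ) * ((l:ℝ) + (d:ℝ) - 1) ≤ z)
      (Nat.zero_le M) hQ0
  have hgt : ∀ l : ℕ, L < l → z < (l:ℝ) * ((l:ℝ) + (d:ℝ) - 1) := by
    intro l hl
    by_cases hlM : l ≤ M
    · have h := Nat.findGreatest_is_greatest
        (P := fun l : ℕ => (l:ℝ) * ((l:ℝ) + (d:ℝ) - 1) ≤ z) (hL ▸ hl) hlM
      exact lt_of_not_ge h
    · push_neg at hlM
      have h1 : z ≤ (M:ℝ) := Nat.le_ceil z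
      have h2 : (M:ℝ) < (l:ℝ) := by exact_mod_cast hlM
      have h3 := hlam_ge l
      linarith
  -- reduce the tsum to a finite sum, and evaluate it
  have hR2 : R1Sd d z = z * Nsum d L - Tsum d L := by
    rw [R1Sd]
    rw [tsum_eq_sum (s := Finset.range (L+1)) ?_]
    · have hcong : ∀ l ∈ Finset.range (L+1),
          sphereMult d l * max (z - (l:ℝ) * ((l:ℝ) + (d:ℝ) - 1)) 0
          = sphereMult d l * z - sphereMult d l * ((l:ℝ) * ((l:ℝ) + (d:ℝ) - 1)) := by
        intro l hl
        have hlL : l ≤ L := by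
          have := Finset.mem_range.mp hl; omega
        have h1 : (l:ℝ) * ((l:ℝ) + (d:ℝ) - 1) ≤ z := le_trans (hlam_mono l L hlL) hL_le
        rw [max_eq_left (by linarith), mul_sub]
      rw [Finset.sum_congr rfl hcong, Finset.sum_sub_distrib, ← Finset.sum_mul]
      rw [Nsum, Tsum]
      ring
    · intro l hl
      have hlL : L < l := by
        simp only [Finset.mem_range] at hl
        omega
      have hzl := hgt l hlL
      rw [max_eq_right (by linarith), mul_zero]
  -- closed forms
  have hN := Nsum_mul_factorial d hd L
  have hT := Tsum_mul_factorial d hd L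
  have hPL : 0 < Pprod d L := Pprod_pos d L
  set B : ℝ := (2*(L:ℝ)+(d:ℝ)) * Pprod d L / 2 with hB
  have hBpos : 0 < B := by
    rw [hB]
    have : (0:ℝ) ≤ (L:ℝ) := Nat.cast_nonneg L
    nlinarith
  have hNB : Nsum d L * (d.factorial : ℝ) = 2 * B := by
    rw [hB]; linarith [hN]
  have hNpos : 0 < Nsum d L := by nlinarith
  have hTN : Tsum d L * ((d:ℝ)+2) = (d:ℝ)*(L:ℝ)*((L:ℝ)+(d:ℝ)) * Nsum d L := by
    apply mul_right_cancel₀ (ne_of_gt hfac)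
    linear_combination hT - ((d:ℝ)*(L:ℝ)*((L:ℝ)+(d:ℝ))) * hN
  set y : ℝ := (L:ℝ)*((L:ℝ)+(d:ℝ)) + ((d:ℝ)+2)*(2*(d:ℝ)-1)/12 with hy
  have hypos : 0 < y := by
    have : (0:ℝ) ≤ (L:ℝ) := Nat.cast_nonneg L
    rw [hy]; nlinarith
  have hB2 : B^2 ≤ y^(d:ℕ) := by
    rw [hB, hy]
    exact B2_le_pow d L hd
  -- the tangent point
  set w : ℝ := B ^ ((2:ℝ)/(d:ℝ)) with hw
  have hwpos : 0 < w := Real.rpow_pos_of_pos hBpos _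
  have hwB : w ^ ((d:ℝ)/2) = B := by
    rw [hw, ← Real.rpow_mul (le_of_lt hBpos)]
    rw [show (2:ℝ)/(d:ℝ) * ((d:ℝ)/2) = 1 by field_simp, Real.rpow_one]
  have hwy : w ≤ y := by
    have h1 : (B^2 : ℝ) ^ ((1:ℝ)/(d:ℝ)) ≤ ((y^(d:ℕ) : ℝ)) ^ ((1:ℝ)/(d:ℝ)) := by
      apply Real.rpow_le_rpow (by positivity) hB2 (by positivity)
    have h2 : (B^2 : ℝ) ^ ((1:ℝ)/(d:ℝ)) = w := by
      rw [hw, ← Real.rpow_natCast B 2, ← Real.rpow_mul (le_of_lt hBpos)]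
      norm_num [div_eq_mul_inv]
    have h3 : ((y^(d:ℕ) : ℝ)) ^ ((1:ℝ)/(d:ℝ)) = y := by
      rw [← Real.rpow_natCast y d, ← Real.rpow_mul (le_of_lt hypos)]
      rw [show (d:ℝ) * ((1:ℝ)/(d:ℝ)) = 1 by field_simp, Real.rpow_one]
    rw [h2, h3] at h1
    exact h1
  -- Bernoulli tangent line inequality
  set xx : ℝ := z + c with hxx
  have hxxpos : 0 < xx := by
    rw [hxx, hc]
    have h6 : (0:ℝ) < (d:ℝ)*(2*(d:ℝ)-1)/12 := by nlinarith [hd2]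
    linarith
  have hp1 : (1:ℝ) ≤ p := by rw [hp]; linarith
  have hber : w^p + p * w^(p-1) * (xx - w) ≤ xx^p := by
    have hs : (-1:ℝ) ≤ xx/w - 1 := by
      have : 0 ≤ xx/w := by positivity
      linarith
    have h := one_add_mul_self_le_rpow_one_add hs hp1
    rw [show (1 + (xx/w - 1)) = xx/w by ring] at h
    rw [Real.div_rpow (le_of_lt hxxpos) (le_of_lt hwpos)] at h
    have hwp : (0:ℝ) < w^p := Real.rpow_pos_of_pos hwpos _
    have hws : w^(p-1) = w^p / w := by
      rw [Real.rpow_sub hwpos, Real.rpow_one]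
    rw [hws]
    have h5 := mul_le_mul_of_nonneg_left h (le_of_lt hwp)
    calc w^p + p*(w^p/w)*(xx-w) = w^p * (1 + p*(xx/w - 1)) := by
          field_simp
      _ ≤ w^p * (xx^p / w^p) := h5
      _ = xx^p := by field_simp
  -- final assembly
  have e1 : w^(p-1) = B := by
    rw [show p - 1 = (d:ℝ)/2 by rw [hp]; ring, hwB]
  have e2 : w^p = B * w := by
    rw [show p = (d:ℝ)/2 + 1 by rw [hp], Real.rpow_add hwpos, hwB, Real.rpow_one]
  have hslack : 0 ≤ ((d:ℝ)/((d:ℝ)+2)) * Nsum d L * (y - w) := by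
    apply mul_nonneg (mul_nonneg (by positivity) (le_of_lt hNpos))
    linarith
  have hApos : 0 < A := by rw [hA]; positivity
  have heq : z * Nsum d L - Tsum d L + ((d:ℝ)/((d:ℝ)+2)) * Nsum d L * (y - w)
      = A * (w^p + p * w^(p-1) * (xx - w)) := by
    have hF : (d.factorial:ℝ) ≠ 0 := ne_of_gt hfac
    have hd2' : ((d:ℝ)+2) ≠ 0 := by positivity
    have hTe : Tsum d L = (d:ℝ)*(L:ℝ)*((L:ℝ)+(d:ℝ))*Nsum d L/((d:ℝ)+2) := by
      rw [eq_div_iff hd2']; exact hTN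
    have hNe : Nsum d L = 2*B/(d.factorial:ℝ) := by
      rw [eq_div_iff hF]; exact hNB
    rw [e1, e2, hxx, hy, hA, hp, hc, hTe, hNe]
    field_simp
    ring
  have key : z * Nsum d L - Tsum d L ≤ A * xx^p := by
    calc z * Nsum d L - Tsum d L
        ≤ z * Nsum d L - Tsum d L + ((d:ℝ)/((d:ℝ)+2)) * Nsum d L * (y - w) :=
          le_add_of_nonneg_right hslack
      _ = A * (w^p + p * w^(p-1) * (xx - w)) := heq
      _ ≤ A * xx^p := mul_le_mul_of_nonneg_left hber (le_of_lt hApos)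
  rw [hR2]
  exact key
end

section
/- For every integer d with 3 ≤ d ≤ 5 and every real z ≥ 0, the first Riesz-mean of the Dirichlet Laplacian eigenvalues on the hemisphere S^d₊ satisfies R₁^D(z) ≤ (2/((d+2)·d!))·z^{1+d/2}. -/
/-- First Riesz-mean of the Dirichlet Laplacian eigenvalues on the hemisphere `S^d₊`:
the eigenvalues are `l(l+d−1)` with multiplicity `C(d+l−2, d−1)` for integers `l ≥ 1`
(the `l = 0` term vanishes since `C(d−2, d−1) = 0` for `d ≥ 2`). -/
noncomputable def R1Dhemi (d : ℕ) (z : ℝ) : ℝ :=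
  ∑' l : ℕ,
    (Nat.choose (d + l - 2) (d - 1) : ℝ) * max (z - (l : ℝ) * ((l : ℝ) + (d : ℝ) - 1)) 0

open Finset

/-! ### Auxiliary lemmas -/

private lemma youngP {t A B : ℝ} (p q : ℕ) (hp : 0 < p) (hq : 0 < q)
    (ht : 0 ≤ t) (hA : 0 ≤ A) (hB : 0 ≤ B) (h : t^(p+q) ≤ A^p * B^q) :
    t ≤ (p:ℝ)/(p+q)*A + (q:ℝ)/(p+q)*B := by
  have hpq : (0:ℝ) < (p:ℝ)+(q:ℝ) := by positivity
  have e1 : (t ^ (p+q)) ^ ((1:ℝ)/((p:ℝ)+(q:ℝ))) = t := by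
    rw [← Real.rpow_natCast t (p+q), ← Real.rpow_mul ht]
    push_cast
    rw [mul_one_div, div_self (ne_of_gt hpq), Real.rpow_one]
  have e2 : (A^p * B^q) ^ ((1:ℝ)/((p:ℝ)+(q:ℝ)))
      = A ^ ((p:ℝ)/((p:ℝ)+(q:ℝ))) * B ^ ((q:ℝ)/((p:ℝ)+(q:ℝ))) := by
    rw [Real.mul_rpow (pow_nonneg hA p) (pow_nonneg hB q),
      ← Real.rpow_natCast A p, ← Real.rpow_natCast B q,
      ← Real.rpow_mul hA, ← Real.rpow_mul hB, mul_one_div, mul_one_div]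
  have mono := Real.rpow_le_rpow (pow_nonneg ht (p+q)) h
    (by positivity : (0:ℝ) ≤ 1/((p:ℝ)+(q:ℝ)))
  rw [e1, e2] at mono
  have am := Real.geom_mean_le_arith_mean2_weighted
    (by positivity : (0:ℝ) ≤ (p:ℝ)/((p:ℝ)+(q:ℝ)))
    (by positivity : (0:ℝ) ≤ (q:ℝ)/((p:ℝ)+(q:ℝ))) hA hB (by field_simp)
  calc t ≤ _ := mono
    _ ≤ _ := am
    _ = (p:ℝ)/(p+q)*A + (q:ℝ)/(p+q)*B := by push_cast; ring

private lemma final3 (u N S : ℝ) (hu : 0 ≤ u) (hN : 0 ≤ N) (hS : 0 ≤ S)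
    (hd : 972*N^5 ≤ 125*S^3) : u^2*N - S ≤ 1/15*u^5 := by
  have key := youngP 2 3 (by norm_num) (by norm_num)
    (t := N * u^2) (A := u^5/6) (B := 5/3*S)
    (by positivity) (by positivity) (by positivity)
    (by nlinarith [mul_nonneg (pow_nonneg hu 10) (sub_nonneg.2 hd)])
  norm_num at key
  linarith

private lemma final4 (u N S : ℝ) (hu : 0 ≤ u) (hN : 0 ≤ N) (hS : 0 ≤ S)
    (hd : 32*N^3 ≤ 3*S^2) : u^2*N - S ≤ 1/72*u^6 := by
  have key := youngP 1 2 (by norm_num) (by norm_num)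
    (t := N * u^2) (A := u^6/24) (B := 3/2*S)
    (by positivity) (by positivity) (by positivity)
    (by nlinarith [mul_nonneg (pow_nonneg hu 6) (sub_nonneg.2 hd)])
  norm_num at key
  linarith

private lemma final5 (u N S : ℝ) (hu : 0 ≤ u) (hN : 0 ≤ N) (hS : 0 ≤ S)
    (hd : 45000000*N^7 ≤ 16807*S^5) : u^2*N - S ≤ 1/420*u^7 := by
  have key := youngP 2 5 (by norm_num) (by norm_num)
    (t := N * u^2) (A := u^7/120) (B := 7/5*S)
    (by positivity) (by positivity) (by positivity)
    (by nlinarith [mul_nonneg (pow_nonneg hu 14) (sub_nonneg.2 hd)])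
  norm_num at key
  linarith

private lemma ch2R (l : ℕ) : (((l+1).choose 2 : ℕ) : ℝ) = (l:ℝ)*(l+1)/2 := by
  induction l with
  | zero => norm_num
  | succ m ih =>
    rw [show (m+1+1).choose 2 = (m+1).choose 1 + (m+1).choose 2 from Nat.choose_succ_succ _ _]
    push_cast [Nat.choose_one_right, ih]; ring

private lemma ch3R (l : ℕ) : (((l+2).choose 3 : ℕ) : ℝ) = (l:ℝ)*(l+1)*(l+2)/6 := by
  induction l with
  | zero => norm_num
  | succ m ih =>
    rw [show (m+1+2).choose 3 = (m+2).choose 2 + (m+2).choose 3 from Nat.choose_succ_succ _ _,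
      Nat.cast_add, show (m+2) = (m+1)+1 from rfl, ch2R (m+1)]
    rw [show (m+1)+1 = m+2 from rfl, ih]
    push_cast; ring

private lemma ch4R (l : ℕ) : (((l+3).choose 4 : ℕ) : ℝ) = (l:ℝ)*(l+1)*(l+2)*(l+3)/24 := by
  induction l with
  | zero => norm_num
  | succ m ih =>
    rw [show (m+1+3).choose 4 = (m+3).choose 3 + (m+3).choose 4 from Nat.choose_succ_succ _ _,
      Nat.cast_add, show (m+3) = (m+1)+2 from rfl, ch3R (m+1)]
    rw [show (m+1)+2 = m+3 from rfl, ih]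
    push_cast; ring

private lemma sumN3 (n : ℕ) : ∑ l ∈ range (n+1), (((l+1).choose 2 : ℕ) : ℝ)
    = (n:ℝ)*(n+1)*(n+2)/6 := by
  induction n with
  | zero => norm_num
  | succ m ih => rw [Finset.sum_range_succ, ih, ch2R (m+1)]; push_cast; ring

private lemma sumS3 (n : ℕ) :
    ∑ l ∈ range (n+1), (((l+1).choose 2 : ℕ) : ℝ) * ((l:ℝ)*((l:ℝ)+2))
      = 3/20*(n:ℝ) + 7/8*(n:ℝ)^2 + 5/4*(n:ℝ)^3 + 5/8*(n:ℝ)^4 + 1/10*(n:ℝ)^5 := by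
  induction n with
  | zero => norm_num
  | succ m ih => rw [Finset.sum_range_succ, ih, ch2R (m+1)]; push_cast; ring

private lemma sumN4 (n : ℕ) : ∑ l ∈ range (n+1), (((l+2).choose 3 : ℕ) : ℝ)
    = (n:ℝ)/4 + 11/24*(n:ℝ)^2 + 1/4*(n:ℝ)^3 + 1/24*(n:ℝ)^4 := by
  induction n with
  | zero => norm_num
  | succ m ih => rw [Finset.sum_range_succ, ih, ch3R (m+1)]; push_cast; ring

private lemma sumS4 (n : ℕ) :
    ∑ l ∈ range (n+1), (((l+2).choose 3 : ℕ) : ℝ) * ((l:ℝ)*((l:ℝ)+3))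
      = 2/15*(n:ℝ) + 17/18*(n:ℝ)^2 + 19/12*(n:ℝ)^3 + 37/36*(n:ℝ)^4
        + 17/60*(n:ℝ)^5 + 1/36*(n:ℝ)^6 := by
  induction n with
  | zero => norm_num
  | succ m ih => rw [Finset.sum_range_succ, ih, ch3R (m+1)]; push_cast; ring

private lemma sumN5 (n : ℕ) : ∑ l ∈ range (n+1), (((l+3).choose 4 : ℕ) : ℝ)
    = (n:ℝ)/5 + 5/12*(n:ℝ)^2 + 7/24*(n:ℝ)^3 + 1/12*(n:ℝ)^4 + 1/120*(n:ℝ)^5 := by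
  induction n with
  | zero => norm_num
  | succ m ih => rw [Finset.sum_range_succ, ih, ch4R (m+1)]; push_cast; ring

private lemma sumS5 (n : ℕ) :
    ∑ l ∈ range (n+1), (((l+3).choose 4 : ℕ) : ℝ) * ((l:ℝ)*((l:ℝ)+4))
      = 5/42*(n:ℝ) + 71/72*(n:ℝ)^2 + 89/48*(n:ℝ)^3 + 205/144*(n:ℝ)^4
        + 25/48*(n:ℝ)^5 + 13/144*(n:ℝ)^6 + 1/168*(n:ℝ)^7 := by
  induction n with
  | zero => norm_num
  | succ m ih => rw [Finset.sum_range_succ, ih, ch4R (m+1)]; push_cast; ring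

private lemma disc3 (n : ℕ) :
    972 * ((n:ℝ)*(n+1)*(n+2)/6)^5
      ≤ 125 * (3/20*(n:ℝ) + 7/8*(n:ℝ)^2 + 5/4*(n:ℝ)^3 + 5/8*(n:ℝ)^4 + 1/10*(n:ℝ)^5)^3 := by
  rcases n with _ | m
  · norm_num
  · have hy : (0:ℝ) ≤ (m:ℝ) := Nat.cast_nonneg m
    push_cast
    linarith [hy, pow_nonneg hy 2, pow_nonneg hy 3, pow_nonneg hy 4, pow_nonneg hy 5,
      pow_nonneg hy 6, pow_nonneg hy 7, pow_nonneg hy 8, pow_nonneg hy 9,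
      pow_nonneg hy 10, pow_nonneg hy 11, pow_nonneg hy 12, pow_nonneg hy 13,
      pow_nonneg hy 14]

private lemma disc4 (n : ℕ) :
    32 * ((n:ℝ)/4 + 11/24*(n:ℝ)^2 + 1/4*(n:ℝ)^3 + 1/24*(n:ℝ)^4)^3
      ≤ 3 * (2/15*(n:ℝ) + 17/18*(n:ℝ)^2 + 19/12*(n:ℝ)^3 + 37/36*(n:ℝ)^4
          + 17/60*(n:ℝ)^5 + 1/36*(n:ℝ)^6)^2 := by
  rcases n with _ | m
  · norm_num
  · have hy : (0:ℝ) ≤ (m:ℝ) := Nat.cast_nonneg m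
    push_cast
    linarith [hy, pow_nonneg hy 2, pow_nonneg hy 3, pow_nonneg hy 4, pow_nonneg hy 5,
      pow_nonneg hy 6, pow_nonneg hy 7, pow_nonneg hy 8, pow_nonneg hy 9,
      pow_nonneg hy 10, pow_nonneg hy 11]

private lemma disc5 (n : ℕ) :
    45000000 * ((n:ℝ)/5 + 5/12*(n:ℝ)^2 + 7/24*(n:ℝ)^3 + 1/12*(n:ℝ)^4 + 1/120*(n:ℝ)^5)^7
      ≤ 16807 * (5/42*(n:ℝ) + 71/72*(n:ℝ)^2 + 89/48*(n:ℝ)^3 + 205/144*(n:ℝ)^4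
          + 25/48*(n:ℝ)^5 + 13/144*(n:ℝ)^6 + 1/168*(n:ℝ)^7)^5 := by
  rcases n with _ | m
  · norm_num
  · have hy : (0:ℝ) ≤ (m:ℝ) := Nat.cast_nonneg m
    push_cast
    linarith [hy, pow_nonneg hy 2, pow_nonneg hy 3, pow_nonneg hy 4, pow_nonneg hy 5,
      pow_nonneg hy 6, pow_nonneg hy 7, pow_nonneg hy 8, pow_nonneg hy 9,
      pow_nonneg hy 10, pow_nonneg hy 11, pow_nonneg hy 12, pow_nonneg hy 13,
      pow_nonneg hy 14, pow_nonneg hy 15, pow_nonneg hy 16, pow_nonneg hy 17,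
      pow_nonneg hy 18, pow_nonneg hy 19, pow_nonneg hy 20, pow_nonneg hy 21,
      pow_nonneg hy 22, pow_nonneg hy 23, pow_nonneg hy 24, pow_nonneg hy 25,
      pow_nonneg hy 26, pow_nonneg hy 27, pow_nonneg hy 28, pow_nonneg hy 29,
      pow_nonneg hy 30, pow_nonneg hy 31, pow_nonneg hy 32, pow_nonneg hy 33,
      pow_nonneg hy 34]

/-- Exponent conversion: `z ^ (1 + k/2) = (√z) ^ (k+2)`. -/
private lemma rpow_half_eq (z : ℝ) (hz : 0 ≤ z) (k : ℕ) :
    z ^ (1 + (k:ℝ)/2) = Real.sqrt z ^ (k + 2) := by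
  have h1 : Real.sqrt z ^ (k+2) = (z ^ ((1:ℝ)/2)) ^ (k+2) := by
    rw [Real.sqrt_eq_rpow]
  rw [h1, ← Real.rpow_natCast (z ^ ((1:ℝ)/2)) (k+2), ← Real.rpow_mul hz]
  congr 1
  push_cast; ring

/-- The generic truncated-sum evaluation: for `a : ℝ` (the shift `d-1`),
the Riesz sum equals `z*N_n - S_n` for the right `n`. -/
private lemma riesz_eval (z : ℝ) (hz : 0 ≤ z) (a : ℝ) (ha : 0 ≤ a) (c : ℕ → ℕ) :
    ∃ n : ℕ,
      (∑' l : ℕ, ((c l : ℕ) : ℝ) * max (z - (l:ℝ)*((l:ℝ)+a)) 0)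
        = z * (∑ l ∈ range (n+1), ((c l : ℕ) : ℝ))
          - ∑ l ∈ range (n+1), ((c l : ℕ) : ℝ) * ((l:ℝ)*((l:ℝ)+a)) := by
  classical
  set u := Real.sqrt z with hu
  have hu0 : 0 ≤ u := Real.sqrt_nonneg z
  have huz : u^2 = z := Real.sq_sqrt hz
  set M := ⌊u⌋₊ + 1 with hM
  set P : ℕ → Prop := fun l => (l:ℝ)*((l:ℝ)+a) ≤ z with hP
  set n := Nat.findGreatest P M with hn
  refine ⟨n, ?_⟩
  have hPn : (n:ℝ)*((n:ℝ)+a) ≤ z :=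
    Nat.findGreatest_spec (Nat.zero_le M) (show P 0 by simp [hP, hz])
  have hbig : ∀ l : ℕ, n < l → z < (l:ℝ)*((l:ℝ)+a) := by
    intro l hl
    by_cases hlM : l ≤ M
    · have := Nat.findGreatest_is_greatest (hn ▸ hl) hlM
      simpa [hP] using this
    · have h1 : (M:ℝ) < (l:ℝ) := by exact_mod_cast Nat.lt_of_not_le hlM
      have h2 : u < M := by
        have := Nat.lt_floor_add_one u
        simpa [hM] using this
      have h3 : u < (l:ℝ) := lt_trans h2 h1
      nlinarith [Nat.cast_nonneg (α := ℝ) l]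
  have hsum : (∑' l : ℕ, ((c l : ℕ) : ℝ) * max (z - (l:ℝ)*((l:ℝ)+a)) 0)
      = ∑ l ∈ range (n+1), ((c l : ℕ) : ℝ) * max (z - (l:ℝ)*((l:ℝ)+a)) 0 := by
    apply tsum_eq_sum
    intro l hl
    have hnl : n < l := by simpa using hl
    rw [max_eq_right (by linarith [hbig l hnl]), mul_zero]
  rw [hsum]
  have heval : ∀ l ∈ range (n+1),
      ((c l : ℕ) : ℝ) * max (z - (l:ℝ)*((l:ℝ)+a)) 0
        = ((c l : ℕ) : ℝ) * (z - (l:ℝ)*((l:ℝ)+a)) := by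
    intro l hl
    have hln : l ≤ n := by simpa [Nat.lt_succ_iff] using hl
    have hc : (l:ℝ) ≤ (n:ℝ) := by exact_mod_cast hln
    have : (l:ℝ)*((l:ℝ)+a) ≤ z := by nlinarith [Nat.cast_nonneg (α := ℝ) l]
    rw [max_eq_left (by linarith)]
  rw [Finset.sum_congr rfl heval, Finset.mul_sum, ← Finset.sum_sub_distrib]
  exact Finset.sum_congr rfl (fun l _ => by ring)

theorem berezin_li_yau_hemisphere_dim_3_4_5 (d : ℕ) (hd3 : 3 ≤ d) (hd5 : d ≤ 5)
    (z : ℝ) (hz : 0 ≤ z) :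
    R1Dhemi d z ≤ 2 / (((d : ℝ) + 2) * (Nat.factorial d : ℝ)) * z ^ (1 + (d : ℝ) / 2) := by
  have hu0 : 0 ≤ Real.sqrt z := Real.sqrt_nonneg z
  have huz : Real.sqrt z ^ 2 = z := Real.sq_sqrt hz
  interval_cases d
  · -- d = 3
    have e : R1Dhemi 3 z
        = ∑' l : ℕ, ((((l+1).choose 2 : ℕ)) : ℝ) * max (z - (l:ℝ)*((l:ℝ)+2)) 0 := by
      unfold R1Dhemi
      apply tsum_congr
      intro l
      rw [show 3 + l - 2 = l + 1 by omega]
      norm_num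
      left
      congr 1
      ring
    obtain ⟨n, hn⟩ := riesz_eval z hz 2 (by norm_num) (fun l => (l+1).choose 2)
    rw [e, hn, sumN3, sumS3, rpow_half_eq z hz 3]
    have h3 := final3 (Real.sqrt z) _ _ hu0 (by positivity) (by positivity) (disc3 n)
    rw [huz] at h3
    norm_num [Nat.factorial] at h3 ⊢
    linarith
  · -- d = 4
    have e : R1Dhemi 4 z
        = ∑' l : ℕ, ((((l+2).choose 3 : ℕ)) : ℝ) * max (z - (l:ℝ)*((l:ℝ)+3)) 0 := by
      unfold R1Dhemi
      apply tsum_congr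
      intro l
      rw [show 4 + l - 2 = l + 2 by omega]
      norm_num
      left
      congr 1
      ring
    obtain ⟨n, hn⟩ := riesz_eval z hz 3 (by norm_num) (fun l => (l+2).choose 3)
    rw [e, hn, sumN4, sumS4, rpow_half_eq z hz 4]
    have h4 := final4 (Real.sqrt z) _ _ hu0 (by positivity) (by positivity) (disc4 n)
    rw [huz] at h4
    norm_num [Nat.factorial] at h4 ⊢
    linarith
  · -- d = 5
    have e : R1Dhemi 5 z
        = ∑' l : ℕ, ((((l+3).choose 4 : ℕ)) : ℝ) * max (z - (l:ℝ)*((l:ℝ)+4)) 0 := by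
      unfold R1Dhemi
      apply tsum_congr
      intro l
      rw [show 5 + l - 2 = l + 3 by omega]
      norm_num
      left
      congr 1
      ring
    obtain ⟨n, hn⟩ := riesz_eval z hz 4 (by norm_num) (fun l => (l+3).choose 4)
    rw [e, hn, sumN5, sumS5, rpow_half_eq z hz 5]
    have h5 := final5 (Real.sqrt z) _ _ hu0 (by positivity) (by positivity) (disc5 n)
    rw [huz] at h5
    norm_num [Nat.factorial] at h5 ⊢
    linarith
end
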